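/- arXiv:1903.05208 — 5 statements merged into one kernel-verified Lean document; each statement's English description precedes it below -/
import Mathlib

section
/- 𝔡 = 𝔡', where 𝔡 is the least cardinality of a dominating subset of [ℕ]^∞ and 𝔡' is the least cardinality of a set A ⊆ [ℕ]^∞ such that for every b ∈ [ℕ]^∞ there is a ∈ A for which the set {n ∈ ℕ : |a ∩ [b(n), b(n+1))| ≥ 2} is finite. -/
open Set Filter Cardinal

noncomputable section

/-- The Cantor space `𝒫(ℕ)`: subsets of `ℕ` identified with their characteristic
functions, with the product topology. -/
abbrev CS : Type := ℕ → Bool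

/-- The subset of `ℕ` coded by `x : CS`. -/
def supp (x : CS) : Set ℕ := {n | x n = true}

/-- `[ℕ]^∞`: the (codes of) infinite subsets of `ℕ`. -/
def NatInf : Set CS := {x | (supp x).Infinite}

/-- The increasing enumeration: `enum s n` is the `n`-th smallest element of `s`. -/
def enum (s : Set ℕ) (n : ℕ) : ℕ := Nat.nth (· ∈ s) n

/-- `f ≤* g`: `f n ≤ g n` for all but finitely many `n`. -/
def LeStar (f g : ℕ → ℕ) : Prop := {n | ¬ f n ≤ g n}.Finite

/-- `f ≤^∞ g`: `f n < g n` for infinitely many `n`. -/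
def LeInf (f g : ℕ → ℕ) : Prop := {n | f n < g n}.Infinite

/-- `cov(M)` for the Cantor space `𝒫(ℕ)`. -/
def covM : Cardinal :=
  sInf {c | ∃ 𝓜 : Set (Set CS), (∀ M ∈ 𝓜, IsMeagre M) ∧ ⋃₀ 𝓜 = Set.univ ∧ #(↥𝓜) = c}

/-- `cof(M)` for the Cantor space `𝒫(ℕ)`. -/
def cofM : Cardinal :=
  sInf {c | ∃ 𝓜 : Set (Set CS), (∀ M ∈ 𝓜, IsMeagre M) ∧
    (∀ M : Set CS, IsMeagre M → ∃ N ∈ 𝓜, M ⊆ N) ∧ #(↥𝓜) = c}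

/-- A `cov(M)`-Luzin subset of the Cantor space. -/
def IsLuzin (X : Set CS) : Prop :=
  covM ≤ #(↥X) ∧ ∀ M : Set CS, IsMeagre M → #(↥(X ∩ M)) < covM

/-- An open cover of a space. -/
def IsOpenCover {X : Type*} [TopologicalSpace X] (𝒰 : Set (Set X)) : Prop :=
  (∀ U ∈ 𝒰, IsOpen U) ∧ ⋃₀ 𝒰 = Set.univ

/-- The Rothberger property. -/
def Rothberger (X : Type*) [TopologicalSpace X] : Prop :=
  ∀ 𝒰 : ℕ → Set (Set X), (∀ n, IsOpenCover (𝒰 n)) →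
    ∃ U : ℕ → Set X, (∀ n, U n ∈ 𝒰 n) ∧ (⋃ n, U n) = Set.univ

/-- The Menger property. -/
def Menger (X : Type*) [TopologicalSpace X] : Prop :=
  ∀ 𝒰 : ℕ → Set (Set X), (∀ n, IsOpenCover (𝒰 n)) →
    ∃ F : ℕ → Set (Set X), (∀ n, (F n).Finite ∧ F n ⊆ 𝒰 n) ∧ (⋃ n, ⋃₀ F n) = Set.univ

/-- An ω-cover: a family of proper open subsets such that every finite subset of
the space is contained in a member of the family. -/
def IsOmegaCover {X : Type*} [TopologicalSpace X] (𝒰 : Set (Set X)) : Prop :=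
  (∀ U ∈ 𝒰, IsOpen U ∧ U ≠ Set.univ) ∧
  ∀ F : Set X, F.Finite → ∃ U ∈ 𝒰, F ⊆ U

/-- The Scheepers property. -/
def Scheepers (X : Type*) [TopologicalSpace X] : Prop :=
  ∀ 𝒰 : ℕ → Set (Set X), (∀ n, IsOpenCover (𝒰 n)) →
    ∃ F : ℕ → Set (Set X), (∀ n, (F n).Finite ∧ F n ⊆ 𝒰 n) ∧
      IsOmegaCover {V : Set X | ∃ n, V = ⋃₀ F n}

/-- `f ≤_U g`. -/
def LeU (U : Ultrafilter ℕ) (f g : ℕ → ℕ) : Prop := {n | f n ≤ g n} ∈ U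

/-- A nonprincipal (free) ultrafilter. -/
def IsFreeUltrafilter (U : Ultrafilter ℕ) : Prop := Filter.cofinite ≤ (U : Filter ℕ)

/-- `𝔟(U)`: the least cardinality of a `≤_U`-unbounded subset of `[ℕ]^∞`. -/
def bU (U : Ultrafilter ℕ) : Cardinal :=
  sInf {c | ∃ X : Set CS, X ⊆ NatInf ∧ #(↥X) = c ∧
    ∀ b ∈ NatInf, ∃ x ∈ X, LeU U (enum (supp b)) (enum (supp x))}

/-- A `U`-scale. -/
def IsUScale (U : Ultrafilter ℕ) (X : Set CS) : Prop :=
  X ⊆ NatInf ∧ bU U ≤ #(↥X) ∧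
  ∀ b ∈ NatInf, #(↥{x ∈ X | LeU U (enum (supp x)) (enum (supp b))}) < bU U

/-- The `U`-Menger property. -/
def UMenger (U : Ultrafilter ℕ) (X : Type*) [TopologicalSpace X] : Prop :=
  ∀ 𝒰 : ℕ → Set (Set X), (∀ n, IsOpenCover (𝒰 n)) →
    ∃ F : ℕ → Set (Set X), (∀ n, (F n).Finite ∧ F n ⊆ 𝒰 n) ∧
      ∀ x : X, {n | x ∈ ⋃₀ F n} ∈ U

/-- `ℤ^ℕ` with the Tychonoff topology. -/
abbrev ZN : Type := ℕ → ℤ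

/-- `cov(M)` for `ℤ^ℕ`. -/
def covMZ : Cardinal :=
  sInf {c | ∃ 𝓜 : Set (Set ZN), (∀ M ∈ 𝓜, IsMeagre M) ∧ ⋃₀ 𝓜 = Set.univ ∧ #(↥𝓜) = c}

/-- `cof(M)` for `ℤ^ℕ`. -/
def cofMZ : Cardinal :=
  sInf {c | ∃ 𝓜 : Set (Set ZN), (∀ M ∈ 𝓜, IsMeagre M) ∧
    (∀ M : Set ZN, IsMeagre M → ∃ N ∈ 𝓜, M ⊆ N) ∧ #(↥𝓜) = c}

/-- A `κ`-Luzin subset of `ℤ^ℕ`. -/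
def IsLuzinZ (κ : Cardinal) (X : Set ZN) : Prop :=
  κ ≤ #(↥X) ∧ ∀ M : Set ZN, IsMeagre M → #(↥(X ∩ M)) < κ

/-- `cov(M)` for the real line. -/
def covMR : Cardinal :=
  sInf {c | ∃ 𝓜 : Set (Set ℝ), (∀ M ∈ 𝓜, IsMeagre M) ∧ ⋃₀ 𝓜 = Set.univ ∧ #(↥𝓜) = c}

/-- `cof(M)` for the real line. -/
def cofMR : Cardinal :=
  sInf {c | ∃ 𝓜 : Set (Set ℝ), (∀ M ∈ 𝓜, IsMeagre M) ∧
    (∀ M : Set ℝ, IsMeagre M → ∃ N ∈ 𝓜, M ⊆ N) ∧ #(↥𝓜) = c}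

/-- A `cov(M)`-Luzin set of reals. -/
def IsLuzinR (X : Set ℝ) : Prop :=
  covMR ≤ #(↥X) ∧ ∀ M : Set ℝ, IsMeagre M → #(↥(X ∩ M)) < covMR

/-- The symmetric-difference group operation on `𝒫(ℕ)` (pointwise `xor`). -/
def symDiff' (x y : CS) : CS := fun n => xor (x n) (y n)

/-- A subgroup of `(𝒫(ℕ), ⊕)`: contains the empty set and is closed under `⊕`
(every element is its own inverse). -/
def IsXorSubgroup (X : Set CS) : Prop :=
  (fun _ => false) ∈ X ∧ ∀ x ∈ X, ∀ y ∈ X, symDiff' x y ∈ X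

/-- `C_p(X)`: continuous real-valued functions on `X` with the topology of
pointwise convergence (as a subspace of the product `ℝ^X`). -/
def Cp (X : Set ℝ) : Set (↥X → ℝ) := {f | Continuous f}

/-- Countable fan tightness. -/
def CountableFanTightness (Y : Type*) [TopologicalSpace Y] : Prop :=
  ∀ y : Y, ∀ U : ℕ → Set Y, (∀ n, y ∈ closure (U n)) →
    ∃ F : ℕ → Set Y, (∀ n, (F n).Finite ∧ F n ⊆ U n) ∧ y ∈ closure (⋃ n, F n)

/-- Countable strong fan tightness. -/
def CountableStrongFanTightness (Y : Type*) [TopologicalSpace Y] : Prop :=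
  ∀ y : Y, ∀ U : ℕ → Set Y, (∀ n, y ∈ closure (U n)) →
    ∃ f : ℕ → Y, (∀ n, f n ∈ U n) ∧ y ∈ closure (Set.range f)

def frakd : Cardinal :=
  sInf {c | ∃ D : Set (Set ℕ), (∀ d ∈ D, d.Infinite) ∧ #(↥D) = c ∧
    ∀ b : Set ℕ, b.Infinite → ∃ d ∈ D, LeStar (enum b) (enum d)}

def frakd' : Cardinal :=
  sInf {c | ∃ A : Set (Set ℕ), (∀ a ∈ A, a.Infinite) ∧ #(↥A) = c ∧
    ∀ b : Set ℕ, b.Infinite → ∃ a ∈ A,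
      {n | 2 ≤ (a ∩ Set.Ico (enum b n) (enum b (n + 1))).ncard}.Finite}

/- ## auxiliary lemmas -/

lemma aux_enum_strictMono {s : Set ℕ} (hs : s.Infinite) : StrictMono (enum s) :=
  Nat.nth_strictMono hs

lemma aux_enum_mem {s : Set ℕ} (hs : s.Infinite) (n : ℕ) : enum s n ∈ s :=
  Nat.nth_mem_of_infinite hs n

lemma aux_le_enum {s : Set ℕ} (hs : s.Infinite) (n : ℕ) : n ≤ enum s n :=
  (aux_enum_strictMono hs).le_apply

lemma aux_enum_range {f : ℕ → ℕ} (hf : StrictMono f) (n : ℕ) :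
    enum (Set.range f) n = f n := by
  induction n using Nat.strong_induction_on with
  | _ n ih =>
    rw [enum, Nat.nth_eq_sInf]
    have hmem : f n ∈ {x | (· ∈ Set.range f) x ∧ ∀ k < n, Nat.nth (· ∈ Set.range f) k < x} := by
      refine ⟨⟨n, rfl⟩, fun k hk => ?_⟩
      have h3 : Nat.nth (· ∈ Set.range f) k = f k := ih k hk
      rw [h3]; exact hf hk
    refine le_antisymm (Nat.sInf_le hmem) ?_
    obtain ⟨⟨m, hm⟩, hlt⟩ := Nat.sInf_mem (⟨f n, hmem⟩ :
      {x | (· ∈ Set.range f) x ∧ ∀ k < n, Nat.nth (· ∈ Set.range f) k < x}.Nonempty)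
    rcases lt_or_ge m n with h | h
    · exfalso
      have h2 := hlt m h
      have h3 : Nat.nth (· ∈ Set.range f) m = f m := ih m h
      rw [h3, hm] at h2
      exact lt_irrefl _ h2
    · rw [← hm]; exact hf.monotone h

/-- the iterate used to build a `frakd'`-witness out of a dominating family -/
def gfun (d : Set ℕ) : ℕ → ℕ
  | 0 => 0
  | k + 1 => enum d (gfun d k + 1) + 1

lemma gfun_strictMono {d : Set ℕ} (hd : d.Infinite) : StrictMono (gfun d) :=
  strictMono_nat_of_lt_succ fun k => by
    have h := aux_le_enum hd (gfun d k + 1)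
    show gfun d k < enum d (gfun d k + 1) + 1
    omega

/-- any witness family for `frakd'` is infinite -/
lemma witness_infinite {A : Set (Set ℕ)} (hAinf : ∀ a ∈ A, a.Infinite)
    (hA : ∀ b : Set ℕ, b.Infinite → ∃ a ∈ A,
      {n | 2 ≤ (a ∩ Set.Ico (enum b n) (enum b (n + 1))).ncard}.Finite) :
    A.Infinite := by
  classical
  by_contra hfin
  rw [Set.not_infinite] at hfin
  rcases A.eq_empty_or_nonempty with hAe | ⟨a0, ha0⟩
  · obtain ⟨a, ha, -⟩ := hA Set.univ Set.infinite_univ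
    rw [hAe] at ha
    exact ha
  set F := hfin.toFinset with hF
  have ha0F : a0 ∈ F := hfin.mem_toFinset.2 ha0
  let b : ℕ → ℕ := fun n => Nat.rec 0 (fun _ prev => (F.sup fun a => enum a (prev + 1)) + 1) n
  have hbs : ∀ n, b (n + 1) = (F.sup fun a => enum a (b n + 1)) + 1 := fun n => rfl
  have hbmono : StrictMono b := strictMono_nat_of_lt_succ fun n => by
    have h1 : enum a0 (b n + 1) ≤ F.sup fun a => enum a (b n + 1) :=
      Finset.le_sup (f := fun a => enum a (b n + 1)) ha0F
    have h2 : b n + 1 ≤ enum a0 (b n + 1) := aux_le_enum (hAinf a0 ha0) _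
    rw [hbs]; omega
  obtain ⟨a, haA, hfa⟩ := hA (Set.range b) (Set.infinite_range_of_injective hbmono.injective)
  have haF : a ∈ F := hfin.mem_toFinset.2 haA
  have hai := hAinf a haA
  have hall : ∀ n, 2 ≤ (a ∩ Set.Ico (enum (Set.range b) n) (enum (Set.range b) (n + 1))).ncard := by
    intro n
    rw [aux_enum_range hbmono, aux_enum_range hbmono]
    have hfinset : (a ∩ Set.Ico (b n) (b (n + 1))).Finite :=
      (Set.finite_Ico _ _).subset Set.inter_subset_right
    have hsup : enum a (b n + 1) ≤ F.sup fun a => enum a (b n + 1) :=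
      Finset.le_sup (f := fun a => enum a (b n + 1)) haF
    have hlt : enum a (b n) < enum a (b n + 1) := aux_enum_strictMono hai (Nat.lt_succ_self _)
    have hge : b n ≤ enum a (b n) := aux_le_enum hai _
    have hx : enum a (b n) ∈ a ∩ Set.Ico (b n) (b (n + 1)) := by
      refine ⟨aux_enum_mem hai _, Set.mem_Ico.2 ⟨hge, ?_⟩⟩
      rw [hbs]; omega
    have hy : enum a (b n + 1) ∈ a ∩ Set.Ico (b n) (b (n + 1)) := by
      refine ⟨aux_enum_mem hai _, Set.mem_Ico.2 ⟨by omega, ?_⟩⟩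
      rw [hbs]; omega
    have h2 := (Set.one_lt_ncard hfinset).2 ⟨_, hx, _, hy, ne_of_lt hlt⟩
    omega
  exact Set.infinite_univ (hfa.subset fun n _ => hall n)

theorem stmt1 : frakd = frakd' := by
  classical
  apply le_antisymm
  · -- frakd ≤ frakd'
    have hne' : {c | ∃ A : Set (Set ℕ), (∀ a ∈ A, a.Infinite) ∧ #(↥A) = c ∧
        ∀ b : Set ℕ, b.Infinite → ∃ a ∈ A,
          {n | 2 ≤ (a ∩ Set.Ico (enum b n) (enum b (n + 1))).ncard}.Finite}.Nonempty := by
      refine ⟨_, {s : Set ℕ | s.Infinite}, fun a ha => ha, rfl, fun b hb => ⟨b, hb, ?_⟩⟩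
      have hsub : ∀ n, (b ∩ Set.Ico (enum b n) (enum b (n + 1))).ncard ≤ 1 := by
        intro n
        have h1 : b ∩ Set.Ico (enum b n) (enum b (n + 1)) ⊆ {enum b n} := by
          rintro x ⟨hxb, hx1, hx2⟩
          have hxr : x ∈ Set.range (Nat.nth (· ∈ b)) := by
            have h0 := Nat.range_nth_of_infinite (p := (· ∈ b)) hb
            rw [h0]; exact hxb
          obtain ⟨m, hm⟩ := hxr
          have hmn : n ≤ m := by
            by_contra hc
            push_neg at hc
            have h5 : Nat.nth (· ∈ b) m < enum b n := aux_enum_strictMono hb hc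
            rw [hm] at h5
            exact absurd hx1 (not_le.2 h5)
          have hmn2 : m < n + 1 := by
            by_contra hc
            push_neg at hc
            have h5 : enum b (n + 1) ≤ Nat.nth (· ∈ b) m := (aux_enum_strictMono hb).monotone hc
            rw [hm] at h5
            exact absurd hx2 (not_lt.2 h5)
          have hmeq : m = n := by omega
          rw [← hm, hmeq]; rfl
        calc (b ∩ Set.Ico (enum b n) (enum b (n + 1))).ncard
            ≤ ({enum b n} : Set ℕ).ncard := Set.ncard_le_ncard h1 (Set.finite_singleton _)
          _ = 1 := Set.ncard_singleton _
      have : {n | 2 ≤ (b ∩ Set.Ico (enum b n) (enum b (n + 1))).ncard} = ∅ := by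
        ext n
        simp only [Set.mem_setOf_eq, Set.mem_empty_iff_false, iff_false]
        have := hsub n
        omega
      rw [this]; exact Set.finite_empty
    obtain ⟨A, hAinf, hAcard, hAprop⟩ := csInf_mem hne'
    have hAinfinite : A.Infinite := witness_infinite hAinf hAprop
    have haleph : ℵ₀ ≤ #(↥A) := by
      have := hAinfinite.to_subtype
      exact Cardinal.aleph0_le_mk _
    -- build the dominating family of shifted enumerations
    set Df : ↥A × ℕ → Set ℕ :=
      fun p => Set.range (fun n => enum (p.1 : Set ℕ) (n + p.2)) with hDf
    have hshift : ∀ (a : Set ℕ), a.Infinite → ∀ k, StrictMono (fun n => enum a (n + k)) := by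
      intro a ha k m n hmn
      exact aux_enum_strictMono ha (by omega)
    have hmemS : #(↥(Set.range Df)) ∈ {c | ∃ D : Set (Set ℕ), (∀ d ∈ D, d.Infinite) ∧
        #(↥D) = c ∧ ∀ b : Set ℕ, b.Infinite → ∃ d ∈ D, LeStar (enum b) (enum d)} := by
      refine ⟨Set.range Df, ?_, rfl, ?_⟩
      · rintro d ⟨⟨⟨a, haA⟩, k⟩, rfl⟩
        exact Set.infinite_range_of_injective (hshift a (hAinf a haA) k).injective
      · intro b hb
        obtain ⟨a, haA, hbad⟩ := hAprop b hb
        have hai := hAinf a haA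
        obtain ⟨N, hN⟩ := hbad.bddAbove
        set M := N + 1 with hM
        have hsmall : ∀ n, M ≤ n → (a ∩ Set.Ico (enum b n) (enum b (n + 1))).ncard ≤ 1 := by
          intro n hn
          by_contra hc
          push_neg at hc
          have : n ∈ {n | 2 ≤ (a ∩ Set.Ico (enum b n) (enum b (n + 1))).ncard} := by
            simp only [Set.mem_setOf_eq]; omega
          have := hN this
          omega
        have key : ∀ j, enum b (M + j) ≤ enum a (enum b M + j) := by
          intro j
          induction j with
          | zero => simpa using aux_le_enum hai (enum b M)
          | succ j ih =>
            by_contra h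
            push_neg at h
            have hmono : enum a (enum b M + j) < enum a (enum b M + j + 1) :=
              aux_enum_strictMono hai (by omega)
            have e1 : enum b (M + (j + 1)) = enum b (M + j + 1) := rfl
            have e2 : enum a (enum b M + (j + 1)) = enum a (enum b M + j + 1) := rfl
            rcases le_or_gt (enum b (M + j + 1)) (enum a (enum b M + j)) with hc | hc
            · omega
            · have hfin2 : (a ∩ Set.Ico (enum b (M + j)) (enum b (M + j + 1))).Finite :=
                (Set.finite_Ico _ _).subset Set.inter_subset_right
              have hx : enum a (enum b M + j) ∈
                  a ∩ Set.Ico (enum b (M + j)) (enum b (M + j + 1)) :=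
                ⟨aux_enum_mem hai _, Set.mem_Ico.2 ⟨ih, hc⟩⟩
              have hy : enum a (enum b M + j + 1) ∈
                  a ∩ Set.Ico (enum b (M + j)) (enum b (M + j + 1)) :=
                ⟨aux_enum_mem hai _, Set.mem_Ico.2 ⟨by omega, by omega⟩⟩
              have h2 := (Set.one_lt_ncard hfin2).2 ⟨_, hx, _, hy, ne_of_lt hmono⟩
              have h3 := hsmall (M + j) (by omega)
              omega
        refine ⟨Df ⟨⟨a, haA⟩, enum b M⟩, ⟨_, rfl⟩, ?_⟩
        have hdmono := hshift a hai (enum b M)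
        have hd : ∀ n, enum (Df ⟨⟨a, haA⟩, enum b M⟩) n = enum a (n + enum b M) := fun n =>
          aux_enum_range hdmono n
        have hle : ∀ n, enum b n ≤ enum a (n + enum b M) := by
          intro n
          rcases le_or_gt M n with hn | hn
          · have h1 := key (n - M)
            have h2 : M + (n - M) = n := by omega
            rw [h2] at h1
            calc enum b n ≤ enum a (enum b M + (n - M)) := h1
              _ ≤ enum a (n + enum b M) := (aux_enum_strictMono hai).monotone (by omega)
          · calc enum b n ≤ enum b M := (aux_enum_strictMono hb).monotone (by omega)
              _ ≤ enum a (enum b M) := aux_le_enum hai _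
              _ ≤ enum a (n + enum b M) := (aux_enum_strictMono hai).monotone (by omega)
        have : {n | ¬ enum b n ≤ enum (Df ⟨⟨a, haA⟩, enum b M⟩) n} = ∅ := by
          ext n
          simp only [Set.mem_setOf_eq, Set.mem_empty_iff_false, iff_false, not_not]
          rw [hd]; exact hle n
        rw [LeStar, this]
        exact Set.finite_empty
    have h1 : frakd ≤ #(↥(Set.range Df)) := csInf_le' hmemS
    have h2 : #(↥(Set.range Df)) ≤ #(↥A × ℕ) := Cardinal.mk_range_le
    have h3 : #(↥A × ℕ) = #(↥A) * ℵ₀ := by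
      rw [Cardinal.mk_prod]
      simp
    have h4 : #(↥A) * ℵ₀ = #(↥A) := by
      rw [Cardinal.mul_eq_max haleph le_rfl, max_eq_left haleph]
    calc frakd ≤ #(↥(Set.range Df)) := h1
      _ ≤ #(↥A × ℕ) := h2
      _ = #(↥A) := by rw [h3, h4]
      _ = frakd' := hAcard
  · -- frakd' ≤ frakd
    have hne : {c | ∃ D : Set (Set ℕ), (∀ d ∈ D, d.Infinite) ∧ #(↥D) = c ∧
        ∀ b : Set ℕ, b.Infinite → ∃ d ∈ D, LeStar (enum b) (enum d)}.Nonempty := by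
      refine ⟨_, {s : Set ℕ | s.Infinite}, fun d hd => hd, rfl, fun b hb => ⟨b, hb, ?_⟩⟩
      have : {n | ¬ enum b n ≤ enum b n} = ∅ := by
        ext n; simp
      rw [LeStar, this]
      exact Set.finite_empty
    obtain ⟨D, hDinf, hDcard, hDdom⟩ := csInf_mem hne
    set Af : ↥D → Set ℕ := fun d => Set.range (gfun (d : Set ℕ)) with hAf
    have hmemS' : #(↥(Set.range Af)) ∈ {c | ∃ A : Set (Set ℕ), (∀ a ∈ A, a.Infinite) ∧
        #(↥A) = c ∧ ∀ b : Set ℕ, b.Infinite → ∃ a ∈ A,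
          {n | 2 ≤ (a ∩ Set.Ico (enum b n) (enum b (n + 1))).ncard}.Finite} := by
      refine ⟨Set.range Af, ?_, rfl, ?_⟩
      · rintro a ⟨⟨d, hdD⟩, rfl⟩
        exact Set.infinite_range_of_injective (gfun_strictMono (hDinf d hdD)).injective
      · intro b hb
        obtain ⟨d, hdD, hstar⟩ := hDdom b hb
        have hdi := hDinf d hdD
        obtain ⟨N, hN⟩ := hstar.bddAbove
        refine ⟨Af ⟨d, hdD⟩, ⟨_, rfl⟩, ?_⟩
        have hgm := gfun_strictMono hdi
        have hkey : ∀ n, N < n →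
            ¬ 2 ≤ (Set.range (gfun d) ∩ Set.Ico (enum b n) (enum b (n + 1))).ncard := by
          intro n hn h2
          have hfin2 : (Set.range (gfun d) ∩ Set.Ico (enum b n) (enum b (n + 1))).Finite :=
            (Set.finite_Ico _ _).subset Set.inter_subset_right
          obtain ⟨x, hx, y, hy, hxy⟩ := (Set.one_lt_ncard hfin2).1 (by omega)
          have hdom : ∀ m, N < m → enum b m ≤ enum d m := by
            intro m hm
            by_contra hc
            have := hN (show m ∈ {n | ¬ enum b n ≤ enum d n} from hc)
            omega
          have main : ∀ u v, u ∈ Set.range (gfun d) ∩ Set.Ico (enum b n) (enum b (n + 1)) →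
              v ∈ Set.range (gfun d) ∩ Set.Ico (enum b n) (enum b (n + 1)) → u < v → False := by
            rintro u v ⟨⟨k, hk⟩, hu1, hu2⟩ ⟨⟨l, hl⟩, hv1, hv2⟩ huv
            have hkl : k < l := by
              have := hgm.lt_iff_lt (a := k) (b := l)
              rw [hk, hl] at this
              exact this.1 huv
            have hvge : gfun d (k + 1) ≤ v := by
              rw [← hl]; exact hgm.monotone (by omega)
            have hstep : gfun d (k + 1) = enum d (u + 1) + 1 := by
              show enum d (gfun d k + 1) + 1 = enum d (u + 1) + 1
              rw [hk]
            have hnb : n ≤ enum b n := aux_le_enum hb n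
            have hδ : enum d (n + 1) ≤ enum d (u + 1) :=
              (aux_enum_strictMono hdi).monotone (by omega)
            have hb1 : enum b (n + 1) ≤ enum d (n + 1) := hdom (n + 1) (by omega)
            omega
          rcases hxy.lt_or_gt with h | h
          · exact main x y hx hy h
          · exact main y x hy hx h
        have hsub : {n | 2 ≤ (Af ⟨d, hdD⟩ ∩ Set.Ico (enum b n) (enum b (n + 1))).ncard} ⊆
            Set.Iic N := by
          intro n hn
          by_contra hc
          simp only [Set.mem_Iic, not_le] at hc
          exact hkey n hc hn
        exact (Set.finite_Iic N).subset hsub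
    have h1 : frakd' ≤ #(↥(Set.range Af)) := csInf_le' hmemS'
    have h2 : #(↥(Set.range Af)) ≤ #(↥D) := Cardinal.mk_range_le
    calc frakd' ≤ #(↥(Set.range Af)) := h1
      _ ≤ #(↥D) := h2
      _ = frakd := hDcard
end
end

section
/- Let M' be a family of meager subsets of [ℕ]^∞ with |M'| < cov(M), let Z ⊆ [ℕ]^∞ be a set with |Z| < cov(M), and let d ∈ [ℕ]^∞. Then there exist x, y ∈ [ℕ]^∞ ∖ ⋃M', whose complements xᶜ = ℕ∖x and yᶜ = ℕ∖y are infinite, such that z ≤^∞ x and z ≤^∞ y for every z ∈ Z, and d ≤* max{xᶜ, yᶜ}. -/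
set_option linter.unusedSectionVars false


open Set Filter Cardinal

noncomputable section

namespace S2


def mach (e : ℕ → ℕ) (g : CS) : ℕ → List Bool × List Bool
  | 0 => ([], [])
  | i+1 =>
    let p := mach e g i
    if e (min (p.1.count false) (p.2.count false)) ≤ i then
      (p.1 ++ [g (2*i)], p.2 ++ [g (2*i+1)])
    else (p.1 ++ [true], p.2 ++ [true])

def Xg (e : ℕ → ℕ) (g : CS) (i : ℕ) : Bool := (mach e g (i+1)).1.getD i true
def Yg (e : ℕ → ℕ) (g : CS) (i : ℕ) : Bool := (mach e g (i+1)).2.getD i true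

lemma getD_len_concat {α : Type*} {l : List α} {i : ℕ} (h : l.length = i) (b d : α) :
    (l ++ [b]).getD i d = b := by
  subst h
  simp [List.getD_eq_getElem?_getD, List.getElem?_concat_length]

variable (e : ℕ → ℕ) (g : CS)

lemma mach_len : ∀ i, (mach e g i).1.length = i ∧ (mach e g i).2.length = i := by
  intro i
  induction i with
  | zero => simp [mach]
  | succ i ih =>
    simp only [mach]
    split <;> simp [ih.1, ih.2]

lemma mach_succ (i : ℕ) : mach e g (i+1) =
    if e (min ((mach e g i).1.count false) ((mach e g i).2.count false)) ≤ i
    then ((mach e g i).1 ++ [g (2*i)], (mach e g i).2 ++ [g (2*i+1)])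
    else ((mach e g i).1 ++ [true], (mach e g i).2 ++ [true]) := rfl

lemma Xg_eq (i : ℕ) : Xg e g i =
    if e (min ((mach e g i).1.count false) ((mach e g i).2.count false)) ≤ i
    then g (2*i) else true := by
  by_cases h : e (min ((mach e g i).1.count false) ((mach e g i).2.count false)) ≤ i
  · rw [if_pos h]; unfold Xg; rw [mach_succ, if_pos h]
    exact getD_len_concat (mach_len e g i).1 _ _
  · rw [if_neg h]; unfold Xg; rw [mach_succ, if_neg h]
    exact getD_len_concat (mach_len e g i).1 _ _

lemma Yg_eq (i : ℕ) : Yg e g i =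
    if e (min ((mach e g i).1.count false) ((mach e g i).2.count false)) ≤ i
    then g (2*i+1) else true := by
  by_cases h : e (min ((mach e g i).1.count false) ((mach e g i).2.count false)) ≤ i
  · rw [if_pos h]; unfold Yg; rw [mach_succ, if_pos h]
    exact getD_len_concat (mach_len e g i).2 _ _
  · rw [if_neg h]; unfold Yg; rw [mach_succ, if_neg h]
    exact getD_len_concat (mach_len e g i).2 _ _

lemma mach_fst_succ (i : ℕ) : (mach e g (i+1)).1 = (mach e g i).1 ++ [Xg e g i] := by
  rw [Xg_eq, mach_succ]
  split <;> simp

lemma mach_snd_succ (i : ℕ) : (mach e g (i+1)).2 = (mach e g i).2 ++ [Yg e g i] := by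
  rw [Yg_eq, mach_succ]
  split <;> simp

lemma cnt_fst (i : ℕ) :
    (mach e g i).1.count false = Nat.count (fun j => Xg e g j = false) i := by
  induction i with
  | zero => simp [mach]
  | succ i ih =>
    rw [mach_fst_succ, Nat.count_succ, List.count_append, ih]
    by_cases h : Xg e g i = false <;> simp [h]

lemma cnt_snd (i : ℕ) :
    (mach e g i).2.count false = Nat.count (fun j => Yg e g j = false) i := by
  induction i with
  | zero => simp [mach]
  | succ i ih =>
    rw [mach_snd_succ, Nat.count_succ, List.count_append, ih]
    by_cases h : Yg e g i = false <;> simp [h]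

lemma rule_X {i : ℕ} (h : Xg e g i = false) :
    e (min (Nat.count (fun j => Xg e g j = false) i)
        (Nat.count (fun j => Yg e g j = false) i)) ≤ i := by
  by_cases hc : e (min ((mach e g i).1.count false) ((mach e g i).2.count false)) ≤ i
  · rwa [← cnt_fst, ← cnt_snd]
  · rw [Xg_eq, if_neg hc] at h; simp at h

lemma rule_Y {i : ℕ} (h : Yg e g i = false) :
    e (min (Nat.count (fun j => Xg e g j = false) i)
        (Nat.count (fun j => Yg e g j = false) i)) ≤ i := by
  by_cases hc : e (min ((mach e g i).1.count false) ((mach e g i).2.count false)) ≤ i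
  · rwa [← cnt_fst, ← cnt_snd]
  · rw [Yg_eq, if_neg hc] at h; simp at h

lemma mach_congr (g' : CS) : ∀ i, (∀ n, n < 2*i → g n = g' n) → mach e g i = mach e g' i := by
  intro i
  induction i with
  | zero => intro _; rfl
  | succ i ih =>
    intro h
    have hih := ih (fun n hn => h n (by omega))
    rw [mach_succ, mach_succ, hih, h (2*i) (by omega), h (2*i+1) (by omega)]


-- placeholders from m1
variable (e : ℕ → ℕ) (g : CS)

lemma compl_supp_eq (x : CS) : (supp x)ᶜ = {i | x i = false} := by
  ext i
  simp [supp, Set.mem_compl_iff]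

lemma enum_eq (x : CS) (n : ℕ) : enum {i | x i = false} n = Nat.nth (fun i => x i = false) n := rfl

lemma enum_supp_eq (x : CS) (n : ℕ) : enum (supp x) n = Nat.nth (fun i => x i = true) n := rfl

lemma main_max (he : Monotone e) (hx : ((supp (Xg e g))ᶜ).Infinite)
    (hy : ((supp (Yg e g))ᶜ).Infinite) (n : ℕ) :
    e n ≤ max (enum ((supp (Xg e g))ᶜ) n) (enum ((supp (Yg e g))ᶜ) n) := by
  rw [compl_supp_eq (Xg e g)] at hx ⊢
  rw [compl_supp_eq (Yg e g)] at hy ⊢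
  rw [enum_eq, enum_eq]
  have hx' : (setOf fun i => Xg e g i = false).Infinite := hx
  have hy' : (setOf fun i => Yg e g i = false).Infinite := hy
  set px := fun i => Xg e g i = false with hpx
  set py := fun i => Yg e g i = false with hpy
  set p := Nat.nth px n with hp
  set q := Nat.nth py n with hq
  rcases le_total q p with hle | hle
  · have hmem : px p := Nat.nth_mem_of_infinite hx' n
    have h1 : Nat.count px p = n := Nat.count_nth_of_infinite hx' n
    have h2 : n ≤ Nat.count py p := by
      have := Nat.count_nth_of_infinite hy' n
      calc n = Nat.count py q := this.symm
        _ ≤ Nat.count py p := Nat.count_monotone py hle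
    have := rule_X e g hmem
    have hmin : n ≤ min (Nat.count px p) (Nat.count py p) := le_min (le_of_eq h1.symm) h2
    exact le_trans (le_trans (he hmin) this) (le_max_left _ _)
  · have hmem : py q := Nat.nth_mem_of_infinite hy' n
    have h1 : Nat.count py q = n := Nat.count_nth_of_infinite hy' n
    have h2 : n ≤ Nat.count px q := by
      have := Nat.count_nth_of_infinite hx' n
      calc n = Nat.count px p := this.symm
        _ ≤ Nat.count px q := Nat.count_monotone px hle
    have := rule_Y e g hmem
    have hmin : n ≤ min (Nat.count px q) (Nat.count py q) := le_min h2 (le_of_eq h1.symm)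
    exact le_trans (le_trans (he hmin) this) (le_max_right _ _)


noncomputable section
def cyc (e : ℕ → ℕ) (g₀ : CS) (p : ℕ) : ℕ := (mach e g₀ p).2.count false

def theL (e : ℕ → ℕ) (g₀ : CS) (p k : ℕ) : ℕ := max (max p (e (cyc e g₀ p))) k

def gstar (e : ℕ → ℕ) (g₀ : CS) (p k : ℕ) (u : ℕ → Bool) : CS := fun n =>
  if n < 2*p then g₀ n
  else if n % 2 = 1 then true
  else if n < 2 * theL e g₀ p k then true
  else u (n/2 - theL e g₀ p k)

variable (e : ℕ → ℕ) (g₀ : CS) (p k : ℕ) (u : ℕ → Bool)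

lemma p_le_theL : p ≤ theL e g₀ p k := le_trans (le_max_left _ _) (le_max_left _ _)
lemma k_le_theL : k ≤ theL e g₀ p k := le_max_right _ _
lemma ecyc_le_theL : e (cyc e g₀ p) ≤ theL e g₀ p k :=
  le_trans (le_max_right _ _) (le_max_left _ _)

lemma gstar_low {n : ℕ} (hn : n < 2*p) : gstar e g₀ p k u n = g₀ n := by
  unfold gstar; rw [if_pos hn]

lemma gstar_odd {i : ℕ} (hi : p ≤ i) : gstar e g₀ p k u (2*i+1) = true := by
  unfold gstar
  rw [if_neg (by omega), if_pos (by omega)]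

lemma gstar_even_mid {i : ℕ} (hp : p ≤ i) (hL : i < theL e g₀ p k) :
    gstar e g₀ p k u (2*i) = true := by
  unfold gstar
  rw [if_neg (by omega), if_neg (by omega), if_pos (by omega)]

lemma gstar_even_hi {i : ℕ} (hL : theL e g₀ p k ≤ i) :
    gstar e g₀ p k u (2*i) = u (i - theL e g₀ p k) := by
  have hp : p ≤ i := le_trans (p_le_theL e g₀ p k) hL
  unfold gstar
  rw [if_neg (by omega), if_neg (by omega), if_neg (by omega)]
  congr 1
  omega

section lemA
variable (he : Monotone e) (g : CS) (q : ℕ)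
  (hg : ∀ n, n < 2*q → g n = gstar e g₀ p k u n) (hpq : p ≤ q)

include hg hpq he

lemma lemA1 : ∀ i, i ≤ p → mach e g i = mach e g₀ i := by
  intro i hi
  refine mach_congr e g g₀ i (fun n hn => ?_)
  rw [hg n (by omega), gstar_low e g₀ p k u (by omega)]

lemma lemA3 : ∀ i, p ≤ i → i < q → Yg e g i = true := by
  intro i hpi hiq
  have hb : g (2*i+1) = true := by
    rw [hg _ (by omega), gstar_odd e g₀ p k u hpi]
  rw [Yg_eq]
  split <;> simp [hb]

lemma lemA2 : ∀ i, p ≤ i → i ≤ q → (mach e g i).2.count false = cyc e g₀ p := by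
  intro i hpi
  induction i, hpi using Nat.le_induction with
  | base => intro _; rw [lemA1 e g₀ p k u he g q hg hpq p le_rfl]; rfl
  | succ i hpi ih =>
    intro hq
    rw [mach_snd_succ, List.count_append, ih (by omega),
      lemA3 e g₀ p k u he g q hg hpq i hpi (by omega)]
    simp

lemma lemA4 : ∀ i, p ≤ i → i < theL e g₀ p k → i < q → Xg e g i = true := by
  intro i hpi hL hiq
  have hb : g (2*i) = true := by
    rw [hg _ (by omega), gstar_even_mid e g₀ p k u hpi hL]
  rw [Xg_eq]
  split <;> simp [hb]

lemma lemA5 : ∀ i, theL e g₀ p k ≤ i → i < q → Xg e g i = u (i - theL e g₀ p k) := by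
  intro i hL hiq
  have hpi : p ≤ i := le_trans (p_le_theL e g₀ p k) hL
  have hcy : (mach e g i).2.count false = cyc e g₀ p :=
    lemA2 e g₀ p k u he g q hg hpq i hpi (le_of_lt hiq)
  have hfree : e (min ((mach e g i).1.count false) ((mach e g i).2.count false)) ≤ i := by
    calc e (min ((mach e g i).1.count false) ((mach e g i).2.count false))
        ≤ e ((mach e g i).2.count false) := he (min_le_right _ _)
      _ = e (cyc e g₀ p) := by rw [hcy]
      _ ≤ theL e g₀ p k := ecyc_le_theL e g₀ p k
      _ ≤ i := hL
  rw [Xg_eq, if_pos hfree, hg _ (by omega), gstar_even_hi e g₀ p k u hL]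

lemma lemAx : ∀ i, i < p → Xg e g i = Xg e g₀ i := by
  intro i hi
  unfold Xg
  rw [lemA1 e g₀ p k u he g q hg hpq (i+1) (by omega)]

end lemA
end

noncomputable section

def Cyl (h : CS) (m : ℕ) : Set CS := {g | ∀ i, i < m → g i = h i}

lemma isOpen_Cyl (h : CS) (m : ℕ) : IsOpen (Cyl h m) := by
  have : Cyl h m = ⋂ i ∈ Finset.range m, (fun g : CS => g i) ⁻¹' {h i} := by
    ext g; simp [Cyl]
  rw [this]
  exact isOpen_biInter_finset fun i _ => (isOpen_discrete _).preimage (continuous_apply i)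

lemma mem_Cyl_self (h : CS) (m : ℕ) : h ∈ Cyl h m := fun _ _ => rfl

lemma Cyl_mono (h : CS) {m m' : ℕ} (hm : m ≤ m') : Cyl h m' ⊆ Cyl h m :=
  fun _ hg i hi => hg i (lt_of_lt_of_le hi hm)

lemma exists_Cyl_subset {U : Set CS} (hU : IsOpen U) {h : CS} (hh : h ∈ U) :
    ∃ m, Cyl h m ⊆ U := by
  obtain ⟨I, u, hIu, hsub⟩ := isOpen_pi_iff.mp hU h hh
  refine ⟨I.sup id + 1, fun g hg => hsub ?_⟩
  intro a ha
  rw [hg a (lt_of_le_of_lt (Finset.le_sup (f := id) ha) (Nat.lt_succ_self _))]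
  exact (hIu a ha).2

lemma nwd_crit {S : Set CS}
    (H : ∀ h₀ m, ∃ h₁ m', Cyl h₁ m' ⊆ Cyl h₀ m ∧ ∀ g ∈ Cyl h₁ m', g ∉ S) :
    IsNowhereDense S := by
  rw [IsNowhereDense, Set.eq_empty_iff_forall_notMem]
  intro x hx
  obtain ⟨m, hm⟩ := exists_Cyl_subset isOpen_interior hx
  obtain ⟨h₁, m', hsub, havoid⟩ := H x m
  have h1 : h₁ ∈ closure S := interior_subset (hm (hsub (mem_Cyl_self h₁ m')))
  obtain ⟨g, hg1, hg2⟩ := mem_closure_iff.mp h1 _ (isOpen_Cyl h₁ m') (mem_Cyl_self _ _)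
  exact havoid g hg1 hg2

lemma nwd_avoid {N : Set CS} (hN : IsNowhereDense N) (hNc : IsClosed N) (h₀ : CS) (m : ℕ) :
    ∃ h₁ m', Cyl h₁ m' ⊆ Cyl h₀ m ∧ ∀ g ∈ Cyl h₁ m', g ∉ N := by
  have hne : (Cyl h₀ m \ N).Nonempty := by
    by_contra hcon
    rw [Set.not_nonempty_iff_eq_empty, Set.diff_eq_empty] at hcon
    have h2 : Cyl h₀ m ⊆ interior (closure N) :=
      interior_maximal (hcon.trans subset_closure) (isOpen_Cyl h₀ m)
    rw [hN] at h2
    exact h2 (mem_Cyl_self h₀ m)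
  obtain ⟨h₁, hh₁⟩ := hne
  obtain ⟨m'', hm''⟩ := exists_Cyl_subset ((isOpen_Cyl h₀ m).sdiff hNc) hh₁
  exact ⟨h₁, m'', fun g hg => (hm'' hg).1, fun g hg => (hm'' hg).2⟩

lemma nwd_val_image {X : Type*} [TopologicalSpace X] {S : Set X} {N : Set ↥S}
    (hN : IsNowhereDense N) : IsNowhereDense (Subtype.val '' N) := by
  rw [IsNowhereDense, Set.eq_empty_iff_forall_notMem]
  intro x hx
  have hxc : x ∈ closure (Subtype.val '' N) := interior_subset hx
  have hcs : closure (Subtype.val '' N) ⊆ closure S :=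
    closure_mono (by rintro _ ⟨y, _, rfl⟩; exact y.2)
  obtain ⟨y, hyU, hyS⟩ := mem_closure_iff.mp (hcs hxc) _ isOpen_interior hx
  set V : Set ↥S := Subtype.val ⁻¹' interior (closure (Subtype.val '' N)) with hV
  have hVopen : IsOpen V := isOpen_interior.preimage continuous_subtype_val
  have hVsub : V ⊆ closure N := by
    intro z hz
    rw [closure_subtype]
    exact interior_subset hz
  have : V ⊆ interior (closure N) := interior_maximal hVsub hVopen
  rw [hN] at this
  exact this (show (⟨y, hyS⟩ : ↥S) ∈ V from hyU)

lemma nwd_isMeagre {X : Type*} [TopologicalSpace X] {s : Set X} (h : IsNowhereDense s) :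
    IsMeagre s :=
  isMeagre_iff_countable_union_isNowhereDense.mpr
    ⟨{s}, by simpa using h, Set.countable_singleton _, by simp⟩

lemma meagre_val_image {X : Type*} [TopologicalSpace X] {S : Set X} {M : Set ↥S}
    (hM : IsMeagre M) : IsMeagre (Subtype.val '' M) := by
  obtain ⟨T, hT1, hT2, hT3⟩ := isMeagre_iff_countable_union_isNowhereDense.mp hM
  refine isMeagre_iff_countable_union_isNowhereDense.mpr
    ⟨(Set.image Subtype.val) '' T, ?_, hT2.image _, ?_⟩
  · rintro _ ⟨t, ht, rfl⟩
    exact nwd_val_image (hT1 t ht)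
  · rintro _ ⟨z, hz, rfl⟩
    obtain ⟨t, ht, hzt⟩ := hT3 hz
    exact ⟨Subtype.val '' t, ⟨t, ht, rfl⟩, ⟨z, hzt, rfl⟩⟩

lemma meagre_sUnion_countable {X : Type*} [TopologicalSpace X] {T : Set (Set X)}
    (hc : T.Countable) (h : ∀ t ∈ T, IsMeagre t) : IsMeagre (⋃₀ T) := by
  rw [Set.sUnion_eq_iUnion, IsMeagre, Set.compl_iUnion]
  haveI := hc.to_subtype
  exact countable_iInter_mem.mpr fun t => h t t.2

end

end S2


namespace S2
noncomputable section
open Cardinal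

/-! ### swap -/

def swapIdx (n : ℕ) : ℕ := if n % 2 = 0 then n + 1 else n - 1

def swapg (g : CS) : CS := fun n => g (swapIdx n)

lemma swapIdx_lt {n k : ℕ} (h : n < 2*k) : swapIdx n < 2*k := by
  unfold swapIdx; split <;> omega

lemma swapIdx_swapIdx (n : ℕ) : swapIdx (swapIdx n) = n := by
  unfold swapIdx
  split <;> split <;> omega

lemma swapg_even (g : CS) (i : ℕ) : swapg g (2*i) = g (2*i+1) := by
  unfold swapg swapIdx
  rw [if_pos (by omega)]

lemma swapg_odd (g : CS) (i : ℕ) : swapg g (2*i+1) = g (2*i) := by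
  unfold swapg swapIdx
  rw [if_neg (by omega), show 2*i+1-1 = 2*i from by omega]

lemma mach_swap (e : ℕ → ℕ) (g : CS) :
    ∀ i, mach e (swapg g) i = ((mach e g i).2, (mach e g i).1) := by
  intro i
  induction i with
  | zero => rfl
  | succ i ih =>
    rw [mach_succ, mach_succ, ih]
    by_cases hc : e (min ((mach e g i).1.count false) ((mach e g i).2.count false)) ≤ i
    · rw [if_pos (by simpa [min_comm] using hc), if_pos hc, swapg_even, swapg_odd]
    · rw [if_neg (by simpa [min_comm] using hc), if_neg hc]

lemma Xg_swap_fun (e : ℕ → ℕ) (g : CS) : Xg e (swapg g) = Yg e g := by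
  funext i
  unfold Xg Yg
  rw [mach_swap]

lemma nwd_pre_swap {N : Set CS} (hN : IsNowhereDense N) : IsNowhereDense (swapg ⁻¹' N) := by
  obtain ⟨Ncl, hsubN, hnwd, hcl⟩ := hN.subset_of_closed_isNowhereDense
  refine nwd_crit fun h₀ m => ?_
  obtain ⟨h₁, m₁, hsub1, hav⟩ := nwd_avoid hnwd hcl (swapg h₀) (2*m)
  have key : ∀ g, g ∈ Cyl (swapg h₁) (2*m₁) → swapg g ∈ Cyl h₁ (2*m₁) := by
    intro g hg i hi
    have h2 := hg (swapIdx i) (swapIdx_lt hi)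
    unfold swapg at h2 ⊢
    rw [h2, swapIdx_swapIdx]
  refine ⟨swapg h₁, 2*m₁, ?_, ?_⟩
  · intro g hg i hi
    have h2 : swapg g ∈ Cyl (swapg h₀) (2*m) :=
      hsub1 (Cyl_mono _ (by omega) (key g hg))
    have h3 := h2 (swapIdx i) (swapIdx_lt (by omega))
    unfold swapg at h3
    rw [swapIdx_swapIdx] at h3
    exact h3
  · intro g hg hgN
    exact hav (swapg g) (Cyl_mono _ (by omega) (key g hg)) (hsubN hgN)

lemma meagre_pre_swap {S : Set CS} (hS : IsMeagre S) : IsMeagre (swapg ⁻¹' S) := by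
  obtain ⟨T, hT1, hT2, hT3⟩ := isMeagre_iff_countable_union_isNowhereDense.mp hS
  refine isMeagre_iff_countable_union_isNowhereDense.mpr
    ⟨(Set.preimage swapg) '' T, ?_, hT2.image _, ?_⟩
  · rintro _ ⟨t, ht, rfl⟩
    exact nwd_pre_swap (hT1 t ht)
  · intro g hg
    obtain ⟨t, ht, hgt⟩ := hT3 hg
    exact ⟨swapg ⁻¹' t, ⟨t, ht, rfl⟩, hgt⟩

/-! ### counting helpers -/

lemma count_all {P : ℕ → Prop} [DecidablePred P] {b : ℕ} (h : ∀ i, i < b → P i) :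
    Nat.count P b = b := by
  induction b with
  | zero => simp
  | succ b ih => rw [Nat.count_succ, if_pos (h b (by omega)), ih (fun i hi => h i (by omega))]

lemma count_none {P : ℕ → Prop} [DecidablePred P] {b : ℕ} (h : ∀ i, i < b → ¬ P i) :
    Nat.count P b = 0 := by
  induction b with
  | zero => simp
  | succ b ih => rw [Nat.count_succ, if_neg (h b (by omega)), ih (fun i hi => h i (by omega))]

lemma count_congr' {P Q : ℕ → Prop} [DecidablePred P] [DecidablePred Q] {b : ℕ}
    (h : ∀ i, i < b → (P i ↔ Q i)) : Nat.count P b = Nat.count Q b := by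
  induction b with
  | zero => simp
  | succ b ih =>
    rw [Nat.count_succ, Nat.count_succ, ih (fun i hi => h i (by omega))]
    by_cases hP : P b
    · rw [if_pos hP, if_pos ((h b (by omega)).mp hP)]
    · rw [if_neg hP, if_neg (fun hQ => hP ((h b (by omega)).mpr hQ))]

lemma count_split (P : ℕ → Prop) [DecidablePred P] {a b : ℕ} (h : a ≤ b) :
    Nat.count P b = Nat.count P a + Nat.count (fun k => P (a+k)) (b - a) := by
  conv_lhs => rw [show b = a + (b - a) by omega]
  rw [Nat.count_add]

/-! ### the basic nwd lemmas about Xg -/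

lemma nwd_pre_X (e : ℕ → ℕ) (he : Monotone e) {N : Set CS} (hN : IsNowhereDense N)
    (hNc : IsClosed N) : IsNowhereDense {g : CS | Xg e g ∈ N} := by
  refine nwd_crit fun h₀ m => ?_
  set p := m with hp
  set L := theL e h₀ p 0 with hL
  have hpL : p ≤ L := p_le_theL _ _ _ _
  set v : CS := fun i => if i < p then Xg e h₀ i else true with hv
  obtain ⟨h, r₀, hsubv, havN⟩ := nwd_avoid hN hNc v L
  have hhv : h ∈ Cyl v L := hsubv (mem_Cyl_self h r₀)
  set r := max r₀ L with hrdef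
  have hLr : L ≤ r := le_max_right _ _
  have hpr : p ≤ r := le_trans hpL hLr
  set u : ℕ → Bool := fun j => h (L + j) with hu
  refine ⟨gstar e h₀ p 0 u, 2*r, ?_, ?_⟩
  · intro g hg i hi
    have h1 : g i = gstar e h₀ p 0 u i := hg i (by omega)
    rw [h1, gstar_low e h₀ p 0 u (by omega)]
  · intro g hg hgN
    have hg' : ∀ n, n < 2*r → g n = gstar e h₀ p 0 u n := hg
    have hXmem : Xg e g ∈ Cyl h r₀ := by
      intro i hi
      have hir : i < r := lt_of_lt_of_le hi (le_max_left _ _)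
      by_cases h1 : i < p
      · rw [lemAx e h₀ p 0 u he g r hg' hpr i h1]
        have hhvi : h i = v i := hhv i (by omega)
        rw [hhvi, hv]
        simp [h1]
      · by_cases h2 : i < L
        · rw [lemA4 e h₀ p 0 u he g r hg' hpr i (not_lt.mp h1) h2 hir]
          have hhvi : h i = v i := hhv i h2
          rw [hhvi, hv]
          simp [h1]
        · rw [lemA5 e h₀ p 0 u he g r hg' hpr i (not_lt.mp h2) hir, hu]
          simp only
          congr 1
          omega
    exact havN (Xg e g) hXmem hgN

lemma meagre_pre_Xg (e : ℕ → ℕ) (he : Monotone e) {S : Set CS} (hS : IsMeagre S) :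
    IsMeagre {g : CS | Xg e g ∈ S} := by
  obtain ⟨T, hT1, hT2, hT3⟩ := isMeagre_iff_countable_union_isNowhereDense.mp hS
  refine isMeagre_iff_countable_union_isNowhereDense.mpr
    ⟨(fun t => {g : CS | Xg e g ∈ closure t}) '' T, ?_, hT2.image _, ?_⟩
  · rintro _ ⟨t, ht, rfl⟩
    exact nwd_pre_X e he (hT1 t ht).closure isClosed_closure
  · intro g hg
    obtain ⟨t, ht, h2⟩ := hT3 hg
    exact ⟨_, ⟨t, ht, rfl⟩, subset_closure h2⟩

lemma Yset_eq (e : ℕ → ℕ) (P : CS → Prop) :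
    {g : CS | P (Yg e g)} = swapg ⁻¹' {g : CS | P (Xg e g)} := by
  ext g
  simp only [Set.mem_setOf_eq, Set.mem_preimage, Xg_swap_fun]

lemma meagre_pre_Yg (e : ℕ → ℕ) (he : Monotone e) {S : Set CS} (hS : IsMeagre S) :
    IsMeagre {g : CS | Yg e g ∈ S} := by
  rw [show {g : CS | Yg e g ∈ S} = swapg ⁻¹' {g : CS | Xg e g ∈ S} from Yset_eq e (· ∈ S)]
  exact meagre_pre_swap (meagre_pre_Xg e he hS)

lemma nwd_SX_false (e : ℕ → ℕ) (he : Monotone e) (k : ℕ) :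
    IsNowhereDense {g : CS | ∀ i, k ≤ i → Xg e g i = false} := by
  refine nwd_crit fun h₀ m => ?_
  set p := m with hp
  set u : ℕ → Bool := fun _ => true with hu
  set L := theL e h₀ p k with hL
  have hpL : p ≤ L := p_le_theL _ _ _ _
  refine ⟨gstar e h₀ p k u, 2*(L+1), ?_, ?_⟩
  · intro g hg i hi
    have h1 : g i = gstar e h₀ p k u i := hg i (by omega)
    rw [h1, gstar_low e h₀ p k u (by omega)]
  · intro g hg hgS
    have hg' : ∀ n, n < 2*(L+1) → g n = gstar e h₀ p k u n := hg
    have h1 := lemA5 e h₀ p k u he g (L+1) hg' (by omega) L le_rfl (by omega)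
    rw [hgS L (k_le_theL _ _ _ _)] at h1
    simp [hu] at h1

lemma nwd_SX_true (e : ℕ → ℕ) (he : Monotone e) (k : ℕ) :
    IsNowhereDense {g : CS | ∀ i, k ≤ i → Xg e g i = true} := by
  refine nwd_crit fun h₀ m => ?_
  set p := m with hp
  set u : ℕ → Bool := fun _ => false with hu
  set L := theL e h₀ p k with hL
  have hpL : p ≤ L := p_le_theL _ _ _ _
  refine ⟨gstar e h₀ p k u, 2*(L+1), ?_, ?_⟩
  · intro g hg i hi
    have h1 : g i = gstar e h₀ p k u i := hg i (by omega)
    rw [h1, gstar_low e h₀ p k u (by omega)]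
  · intro g hg hgS
    have hg' : ∀ n, n < 2*(L+1) → g n = gstar e h₀ p k u n := hg
    have h1 := lemA5 e h₀ p k u he g (L+1) hg' (by omega) L le_rfl (by omega)
    rw [hgS L (k_le_theL _ _ _ _)] at h1
    simp [hu] at h1

lemma nwd_DN (e : ℕ → ℕ) (he : Monotone e) (f : ℕ → ℕ) (N : ℕ) :
    IsNowhereDense {g : CS | (supp (Xg e g)).Infinite ∧
      ∀ n, N ≤ n → enum (supp (Xg e g)) n ≤ f n} := by
  classical
  refine nwd_crit fun h₀ m => ?_
  set p := m with hp
  set L := theL e h₀ p 0 with hL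
  have hpL : p ≤ L := p_le_theL _ _ _ _
  set o := Nat.count (fun j => Xg e h₀ j = true) p + (L - p) with ho
  set n := max N o with hn
  have hNn : N ≤ n := le_max_left _ _
  have hon : o ≤ n := le_max_right _ _
  set t := n - o with ht
  set u : ℕ → Bool := fun j => decide (j < t) with hu
  set r := max (L + t) (f n + 1) with hr
  have hLtr : L + t ≤ r := le_max_left _ _
  have hfr : f n + 1 ≤ r := le_max_right _ _
  have hpr : p ≤ r := by omega
  refine ⟨gstar e h₀ p 0 u, 2*r, ?_, ?_⟩
  · intro g hg i hi
    have h1 : g i = gstar e h₀ p 0 u i := hg i (by omega)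
    rw [h1, gstar_low e h₀ p 0 u (by omega)]
  · intro g hg hgS
    obtain ⟨hinf, hle⟩ := hgS
    have hg' : ∀ n', n' < 2*r → g n' = gstar e h₀ p 0 u n' := hg
    set P := fun j => Xg e g j = true with hP
    have c1 : Nat.count P p = Nat.count (fun j => Xg e h₀ j = true) p :=
      count_congr' (fun i hi => by
        show (Xg e g i = true) ↔ (Xg e h₀ i = true)
        rw [lemAx e h₀ p 0 u he g r hg' hpr i hi])
    have c2 : Nat.count (fun k => P (p+k)) (L - p) = L - p :=
      count_all (fun k hk =>
        lemA4 e h₀ p 0 u he g r hg' hpr (p+k) (by omega) (by omega) (by omega))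
    have c3 : Nat.count (fun k => P (L+k)) t = t := by
      refine count_all (fun k hk => ?_)
      have h5 := lemA5 e h₀ p 0 u he g r hg' hpr (L+k) (by omega) (by omega)
      show Xg e g (L+k) = true
      rw [h5, hu]
      simp only [decide_eq_true_eq]
      omega
    have c4 : Nat.count (fun k => P ((L+t)+k)) (r - (L+t)) = 0 := by
      refine count_none (fun k hk => ?_)
      have h5 := lemA5 e h₀ p 0 u he g r hg' hpr ((L+t)+k) (by omega) (by omega)
      show ¬ Xg e g ((L+t)+k) = true
      rw [h5, hu]
      simp only [decide_eq_true_eq]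
      omega
    have s3 := count_split P hpL
    have s2 := count_split P (show L ≤ L + t by omega)
    rw [Nat.add_sub_cancel_left] at s2
    have s1 := count_split P hLtr
    have hcount : Nat.count P r = n := by omega
    have hmono : Nat.count P (f n + 1) ≤ n :=
      le_trans (Nat.count_monotone P hfr) (le_of_eq hcount)
    have hinf' : (setOf P).Infinite := hinf
    have hnth : f n + 1 ≤ Nat.nth P n := (Nat.count_le_iff_le_nth hinf').mp hmono
    have hcon := hle n hNn
    rw [enum_supp_eq] at hcon
    rw [← hP] at hcon
    omega

/-! ### covM facts -/

lemma covM_set_nonempty :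
    {c | ∃ 𝓜 : Set (Set CS), (∀ M ∈ 𝓜, IsMeagre M) ∧ ⋃₀ 𝓜 = Set.univ ∧ #(↥𝓜) = c}.Nonempty := by
  refine ⟨_, Set.range (fun x : CS => ({x} : Set CS)), ?_, ?_, rfl⟩
  · rintro M ⟨x, rfl⟩
    refine nwd_isMeagre (nwd_crit fun h₀ m => ?_)
    refine ⟨fun i => if i < m then h₀ i else !(x i), m+1, ?_, ?_⟩
    · intro g hg i hi
      rw [hg i (by omega)]
      simp [hi]
    · intro g hg hgx
      have h1 := hg m (by omega)
      rw [Set.mem_singleton_iff] at hgx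
      subst hgx
      simp only [lt_self_iff_false, if_false, ite_false] at h1
      cases hb : g m <;> rw [hb] at h1 <;> simp at h1
  · apply Set.eq_univ_of_forall
    intro x
    exact ⟨{x}, ⟨x, rfl⟩, rfl⟩

lemma not_isMeagre_univ : ¬ IsMeagre (Set.univ : Set CS) := by
  intro h
  rw [IsMeagre, Set.compl_univ] at h
  obtain ⟨x, hx⟩ := (dense_of_mem_residual h).nonempty
  exact hx

lemma aleph0_lt_covM : ℵ₀ < covM := by
  obtain ⟨𝓜, hm, hcov, hcard⟩ := csInf_mem covM_set_nonempty
  rw [show sInf {c | ∃ 𝓜 : Set (Set CS), (∀ M ∈ 𝓜, IsMeagre M) ∧ ⋃₀ 𝓜 = Set.univ ∧ #(↥𝓜) = c}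
    = covM from rfl] at hcard
  by_contra hlecon
  push_neg at hlecon
  rw [← hcard] at hlecon
  have hc : 𝓜.Countable := Set.countable_coe_iff.mp (Cardinal.mk_le_aleph0_iff.mp hlecon)
  have hmeag : IsMeagre (⋃₀ 𝓜) := meagre_sUnion_countable hc hm
  rw [hcov] at hmeag
  exact not_isMeagre_univ hmeag

lemma exists_avoid (𝓝 : Set (Set CS)) (hm : ∀ T ∈ 𝓝, IsMeagre T) (hc : #(↥𝓝) < covM) :
    ∃ g : CS, ∀ T ∈ 𝓝, g ∉ T := by
  by_contra hcon
  push_neg at hcon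
  have hcov : ⋃₀ 𝓝 = Set.univ := by
    apply Set.eq_univ_of_forall
    intro g
    obtain ⟨T, h1, h2⟩ := hcon g
    exact ⟨T, h1, h2⟩
  have hle : covM ≤ #(↥𝓝) := csInf_le (OrderBot.bddBelow _) ⟨𝓝, hm, hcov, rfl⟩
  exact absurd hc (not_lt.mpr hle)

end
end S2

namespace S2
noncomputable section
open Cardinal

variable (e : ℕ → ℕ) (he : Monotone e)

include he

lemma meagre_badXM {M : Set ↥NatInf} (hM : IsMeagre M) :
    IsMeagre {g : CS | Xg e g ∈ Subtype.val '' M} :=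
  meagre_pre_Xg e he (meagre_val_image hM)

lemma meagre_badYM {M : Set ↥NatInf} (hM : IsMeagre M) :
    IsMeagre {g : CS | Yg e g ∈ Subtype.val '' M} :=
  meagre_pre_Yg e he (meagre_val_image hM)

lemma meagre_badXZ (f : ℕ → ℕ) :
    IsMeagre {g : CS | (supp (Xg e g)).Infinite ∧ ¬ LeInf f (enum (supp (Xg e g)))} := by
  have hsub : {g : CS | (supp (Xg e g)).Infinite ∧ ¬ LeInf f (enum (supp (Xg e g)))}
      ⊆ ⋃ N : ℕ, {g : CS | (supp (Xg e g)).Infinite ∧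
          ∀ n, N ≤ n → enum (supp (Xg e g)) n ≤ f n} := by
    rintro g ⟨h1, h2⟩
    rw [LeInf, Set.not_infinite] at h2
    obtain ⟨b, hb⟩ := h2.bddAbove
    refine Set.mem_iUnion.mpr ⟨b+1, h1, fun n hn => ?_⟩
    by_contra hcon
    push_neg at hcon
    have hmem : n ∈ {n | f n < enum (supp (Xg e g)) n} := hcon
    have := hb hmem
    omega
  exact IsMeagre.mono hsub (isMeagre_iUnion (fun N => nwd_isMeagre (nwd_DN e he f N)))

lemma meagre_badYZ (f : ℕ → ℕ) :
    IsMeagre {g : CS | (supp (Yg e g)).Infinite ∧ ¬ LeInf f (enum (supp (Yg e g)))} := by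
  rw [show {g : CS | (supp (Yg e g)).Infinite ∧ ¬ LeInf f (enum (supp (Yg e g)))}
      = swapg ⁻¹' {g : CS | (supp (Xg e g)).Infinite ∧ ¬ LeInf f (enum (supp (Xg e g)))} from
    Yset_eq e (fun c => (supp c).Infinite ∧ ¬ LeInf f (enum (supp c)))]
  exact meagre_pre_swap (meagre_badXZ e he f)

lemma meagre_badXinf : IsMeagre {g : CS | ¬ (supp (Xg e g)).Infinite} := by
  have hsub : {g : CS | ¬ (supp (Xg e g)).Infinite}
      ⊆ ⋃ k : ℕ, {g : CS | ∀ i, k ≤ i → Xg e g i = false} := by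
    intro g hgm
    rw [Set.mem_setOf_eq, Set.not_infinite] at hgm
    obtain ⟨b, hb⟩ := hgm.bddAbove
    refine Set.mem_iUnion.mpr ⟨b+1, fun i hi => ?_⟩
    by_contra hcon
    have hmem : i ∈ supp (Xg e g) := by
      cases hx : Xg e g i
      · exact absurd hx hcon
      · exact hx
    have := hb hmem
    omega
  exact IsMeagre.mono hsub (isMeagre_iUnion (fun k => nwd_isMeagre (nwd_SX_false e he k)))

lemma meagre_badXcinf : IsMeagre {g : CS | ¬ ((supp (Xg e g))ᶜ).Infinite} := by
  have hsub : {g : CS | ¬ ((supp (Xg e g))ᶜ).Infinite}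
      ⊆ ⋃ k : ℕ, {g : CS | ∀ i, k ≤ i → Xg e g i = true} := by
    intro g hgm
    rw [Set.mem_setOf_eq, Set.not_infinite] at hgm
    obtain ⟨b, hb⟩ := hgm.bddAbove
    refine Set.mem_iUnion.mpr ⟨b+1, fun i hi => ?_⟩
    by_contra hcon
    have hmem : i ∈ (supp (Xg e g))ᶜ := hcon
    have := hb hmem
    omega
  exact IsMeagre.mono hsub (isMeagre_iUnion (fun k => nwd_isMeagre (nwd_SX_true e he k)))

lemma meagre_badYinf : IsMeagre {g : CS | ¬ (supp (Yg e g)).Infinite} := by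
  rw [show {g : CS | ¬ (supp (Yg e g)).Infinite}
      = swapg ⁻¹' {g : CS | ¬ (supp (Xg e g)).Infinite} from
    Yset_eq e (fun c => ¬ (supp c).Infinite)]
  exact meagre_pre_swap (meagre_badXinf e he)

lemma meagre_badYcinf : IsMeagre {g : CS | ¬ ((supp (Yg e g))ᶜ).Infinite} := by
  rw [show {g : CS | ¬ ((supp (Yg e g))ᶜ).Infinite}
      = swapg ⁻¹' {g : CS | ¬ ((supp (Xg e g))ᶜ).Infinite} from
    Yset_eq e (fun c => ¬ ((supp c)ᶜ).Infinite)]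
  exact meagre_pre_swap (meagre_badXcinf e he)

end
end S2


theorem stmt2 (𝓜 : Set (Set ↥NatInf)) (h𝓜 : ∀ M ∈ 𝓜, IsMeagre M)
    (h𝓜card : #(↥𝓜) < covM) (Z : Set ↥NatInf) (hZ : #(↥Z) < covM) (d : ↥NatInf) :
    ∃ x y : ↥NatInf, x ∉ ⋃₀ 𝓜 ∧ y ∉ ⋃₀ 𝓜 ∧
      (supp x.1)ᶜ.Infinite ∧ (supp y.1)ᶜ.Infinite ∧
      (∀ z ∈ Z, LeInf (enum (supp z.1)) (enum (supp x.1)) ∧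
        LeInf (enum (supp z.1)) (enum (supp y.1))) ∧
      LeStar (enum (supp d.1))
        (fun n => max (enum ((supp x.1)ᶜ) n) (enum ((supp y.1)ᶜ) n)) := by
  classical
  have hdinf : (setOf (· ∈ supp d.1)).Infinite := by
    show (supp d.1).Infinite
    exact d.2
  set e : ℕ → ℕ := enum (supp d.1) with he_def
  have he : Monotone e := Nat.nth_monotone hdinf
  set A1 : Set (Set CS) := (fun M : Set ↥NatInf => {g : CS | S2.Xg e g ∈ Subtype.val '' M}) '' 𝓜
    with hA1
  set A2 : Set (Set CS) := (fun M : Set ↥NatInf => {g : CS | S2.Yg e g ∈ Subtype.val '' M}) '' 𝓜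
    with hA2
  set A3 : Set (Set CS) := (fun z : ↥NatInf => {g : CS | (supp (S2.Xg e g)).Infinite ∧
      ¬ LeInf (enum (supp z.1)) (enum (supp (S2.Xg e g)))}) '' Z with hA3
  set A4 : Set (Set CS) := (fun z : ↥NatInf => {g : CS | (supp (S2.Yg e g)).Infinite ∧
      ¬ LeInf (enum (supp z.1)) (enum (supp (S2.Yg e g)))}) '' Z with hA4
  set A5 : Set (Set CS) := {{g : CS | ¬ (supp (S2.Xg e g)).Infinite},
    {g : CS | ¬ ((supp (S2.Xg e g))ᶜ).Infinite},
    {g : CS | ¬ (supp (S2.Yg e g)).Infinite},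
    {g : CS | ¬ ((supp (S2.Yg e g))ᶜ).Infinite}} with hA5
  set 𝓝 : Set (Set CS) := A1 ∪ A2 ∪ A3 ∪ A4 ∪ A5 with h𝓝
  have hmeag : ∀ T ∈ 𝓝, IsMeagre T := by
    intro T hT
    rw [h𝓝] at hT
    simp only [hA1, hA2, hA3, hA4, hA5, Set.mem_union, Set.mem_image, Set.mem_insert_iff,
      Set.mem_singleton_iff] at hT
    rcases hT with ((((⟨M, hM, rfl⟩ | ⟨M, hM, rfl⟩) | ⟨z, hz, rfl⟩) | ⟨z, hz, rfl⟩) |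
      (rfl | rfl | rfl | rfl))
    · exact S2.meagre_badXM e he (h𝓜 M hM)
    · exact S2.meagre_badYM e he (h𝓜 M hM)
    · exact S2.meagre_badXZ e he _
    · exact S2.meagre_badYZ e he _
    · exact S2.meagre_badXinf e he
    · exact S2.meagre_badXcinf e he
    · exact S2.meagre_badYinf e he
    · exact S2.meagre_badYcinf e he
  have hlt : ∀ {A B : Set (Set CS)}, #(↥A) < covM → #(↥B) < covM → #(↥(A ∪ B)) < covM := by
    intro A B hA hB
    exact lt_of_le_of_lt (Cardinal.mk_union_le A B)
      (Cardinal.add_lt_of_lt (le_of_lt S2.aleph0_lt_covM) hA hB)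
  have h1lt : #(↥A1) < covM := lt_of_le_of_lt Cardinal.mk_image_le h𝓜card
  have h2lt : #(↥A2) < covM := lt_of_le_of_lt Cardinal.mk_image_le h𝓜card
  have h3lt : #(↥A3) < covM := lt_of_le_of_lt Cardinal.mk_image_le hZ
  have h4lt : #(↥A4) < covM := lt_of_le_of_lt Cardinal.mk_image_le hZ
  have h5fin : A5.Finite := by
    rw [hA5]
    exact (((Set.finite_singleton _).insert _).insert _).insert _
  have h5lt : #(↥A5) < covM := by
    haveI := h5fin.to_subtype
    exact lt_trans (Cardinal.lt_aleph0_of_finite ↥A5) S2.aleph0_lt_covM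
  have hcard : #(↥𝓝) < covM := by
    rw [h𝓝]
    exact hlt (hlt (hlt (hlt h1lt h2lt) h3lt) h4lt) h5lt
  obtain ⟨g, hg⟩ := S2.exists_avoid 𝓝 hmeag hcard
  have hmem1 : ∀ T ∈ A1, T ∈ 𝓝 := fun T hT =>
    Set.mem_union_left _ (Set.mem_union_left _ (Set.mem_union_left _ (Set.mem_union_left _ hT)))
  have hmem2 : ∀ T ∈ A2, T ∈ 𝓝 := fun T hT =>
    Set.mem_union_left _ (Set.mem_union_left _ (Set.mem_union_left _ (Set.mem_union_right _ hT)))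
  have hmem3 : ∀ T ∈ A3, T ∈ 𝓝 := fun T hT =>
    Set.mem_union_left _ (Set.mem_union_left _ (Set.mem_union_right _ hT))
  have hmem4 : ∀ T ∈ A4, T ∈ 𝓝 := fun T hT =>
    Set.mem_union_left _ (Set.mem_union_right _ hT)
  have hmem5 : ∀ T ∈ A5, T ∈ 𝓝 := fun T hT => Set.mem_union_right _ hT
  have hXinf : (supp (S2.Xg e g)).Infinite := by
    by_contra hcon
    exact hg _ (hmem5 _ (by rw [hA5]; exact Set.mem_insert _ _)) hcon
  have hXcinf : ((supp (S2.Xg e g))ᶜ).Infinite := by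
    by_contra hcon
    refine hg {g' : CS | ¬ ((supp (S2.Xg e g'))ᶜ).Infinite} (hmem5 _ ?_) hcon
    rw [hA5]
    exact Set.mem_insert_of_mem _ (Set.mem_insert _ _)
  have hYinf : (supp (S2.Yg e g)).Infinite := by
    by_contra hcon
    refine hg {g' : CS | ¬ (supp (S2.Yg e g')).Infinite} (hmem5 _ ?_) hcon
    rw [hA5]
    exact Set.mem_insert_of_mem _ (Set.mem_insert_of_mem _ (Set.mem_insert _ _))
  have hYcinf : ((supp (S2.Yg e g))ᶜ).Infinite := by
    by_contra hcon
    refine hg {g' : CS | ¬ ((supp (S2.Yg e g'))ᶜ).Infinite} (hmem5 _ ?_) hcon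
    rw [hA5]
    exact Set.mem_insert_of_mem _ (Set.mem_insert_of_mem _
      (Set.mem_insert_of_mem _ (Set.mem_singleton _)))
  refine ⟨⟨S2.Xg e g, hXinf⟩, ⟨S2.Yg e g, hYinf⟩, ?_, ?_, hXcinf, hYcinf, ?_, ?_⟩
  · rintro ⟨M, hM, hxM⟩
    exact hg {g' : CS | S2.Xg e g' ∈ Subtype.val '' M}
      (hmem1 _ ⟨M, hM, rfl⟩) ⟨⟨S2.Xg e g, hXinf⟩, hxM, rfl⟩
  · rintro ⟨M, hM, hyM⟩
    exact hg {g' : CS | S2.Yg e g' ∈ Subtype.val '' M}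
      (hmem2 _ ⟨M, hM, rfl⟩) ⟨⟨S2.Yg e g, hYinf⟩, hyM, rfl⟩
  · intro z hz
    constructor
    · by_contra hno
      exact hg {g' : CS | (supp (S2.Xg e g')).Infinite ∧
          ¬ LeInf (enum (supp z.1)) (enum (supp (S2.Xg e g')))}
        (hmem3 _ ⟨z, hz, rfl⟩) ⟨hXinf, hno⟩
    · by_contra hno
      exact hg {g' : CS | (supp (S2.Yg e g')).Infinite ∧
          ¬ LeInf (enum (supp z.1)) (enum (supp (S2.Yg e g')))}
        (hmem4 _ ⟨z, hz, rfl⟩) ⟨hYinf, hno⟩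
  · have hmm : ∀ n, e n ≤ max (enum ((supp (S2.Xg e g))ᶜ) n) (enum ((supp (S2.Yg e g))ᶜ) n) :=
      S2.main_max e g he hXcinf hYcinf
    have h0 : {n : ℕ | ¬ e n ≤
        max (enum ((supp (S2.Xg e g))ᶜ) n) (enum ((supp (S2.Yg e g))ᶜ) n)} = ∅ :=
      Set.eq_empty_iff_forall_notMem.mpr (fun n hn => hn (hmm n))
    show Set.Finite {n : ℕ | ¬ e n ≤
        max (enum ((supp (S2.Xg e g))ᶜ) n) (enum ((supp (S2.Yg e g))ᶜ) n)}
    rw [h0]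
    exact Set.finite_empty
end
end

section
/- Let U be a nonprincipal ultrafilter on ℕ with 𝔟(U) = cov(M). Let M' be a family of meager subsets of 𝒫(ℕ) with |M'| < cov(M), and let Z ⊆ [ℕ]^∞ be a set with |Z| < cov(M). Then there is x ∈ [ℕ]^∞ ∖ ⋃M' such that z ≤_U x for every z ∈ Z. -/
open Set Filter Cardinal

noncomputable section

namespace S7
attribute [local instance] Classical.propDecidable

structure MSt where
  len : ℕ
  E : List ℕ
  A : Set ℕ

def addSafe (β : ℕ → ℕ) (s : MSt) : MSt :=
  ⟨max s.len (β s.E.length) + 1, s.E ++ [max s.len (β s.E.length)], s.A⟩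

def newElems (u : List Bool) (len : ℕ) : List ℕ :=
  ((List.range u.length).filter (fun r => u.getD r false)).map (· + len)

def appendU (u : List Bool) (s : MSt) : MSt :=
  ⟨s.len + u.length, s.E ++ newElems u s.len,
   s.A ∪ Set.Ico s.E.length (s.E.length + (newElems u s.len).length)⟩

structure St where
  m : Bool → MSt
  c : ℕ

def doMove (β : ℕ → ℕ) (σ : St) (i : Bool) (u : List Bool) : St :=
  let s1 := (addSafe β)^[σ.c - (σ.m i).E.length] (σ.m i)
  let s2 := appendU u s1
  ⟨fun i' => if i' = i then addSafe β s2 else σ.m i', s2.E.length⟩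

/-- good machine state -/
def MSgood (β : ℕ → ℕ) (s : MSt) : Prop :=
  List.Pairwise (· < ·) s.E ∧ (∀ x ∈ s.E, x < s.len) ∧
  (∀ j, j < s.E.length → β j ≤ s.E.getD j 0 ∨ j ∈ s.A)

def Stgood (β : ℕ → ℕ) (σ : St) : Prop :=
  (∀ i, MSgood β (σ.m i)) ∧ (∀ i j, j ∈ (σ.m i).A → j < σ.c) ∧
  ((σ.m true).A ∩ (σ.m false).A = ∅)

def MSle (s s' : MSt) : Prop :=
  s.len ≤ s'.len ∧ s.E <+: s'.E ∧ s.A ⊆ s'.A ∧ (∀ x ∈ s'.E, x ∈ s.E ∨ s.len ≤ x)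

lemma MSle.refl (s : MSt) : MSle s s :=
  ⟨le_rfl, List.prefix_rfl, subset_rfl, fun x hx => Or.inl hx⟩

lemma MSle.trans {s t r : MSt} (h1 : MSle s t) (h2 : MSle t r) : MSle s r := by
  obtain ⟨l1, p1, a1, e1⟩ := h1
  obtain ⟨l2, p2, a2, e2⟩ := h2
  refine ⟨l1.trans l2, p1.trans p2, a1.trans a2, fun x hx => ?_⟩
  rcases e2 x hx with h | h
  · exact e1 x h
  · exact Or.inr (l1.trans h)

lemma addSafe_le (β : ℕ → ℕ) (s : MSt) : MSle s (addSafe β s) := by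
  refine ⟨by simp [addSafe]; omega, ⟨_, rfl⟩, subset_rfl, fun x hx => ?_⟩
  rcases List.mem_append.1 hx with h | h
  · exact Or.inl h
  · simp only [List.mem_singleton] at h
    exact Or.inr (h ▸ le_max_left _ _)

lemma addSafe_good {β : ℕ → ℕ} {s : MSt} (h : MSgood β s) : MSgood β (addSafe β s) := by
  obtain ⟨hs, hb, hi⟩ := h
  refine ⟨?_, ?_, ?_⟩
  · rw [addSafe]
    rw [List.pairwise_append]
    refine ⟨hs, by simp, ?_⟩
    intro a ha b hb'
    simp only [List.mem_singleton] at hb'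
    subst hb'
    exact lt_of_lt_of_le (hb a ha) (le_max_left _ _)
  · intro x hx
    rcases List.mem_append.1 hx with h | h
    · exact lt_of_lt_of_le (hb x h) (by simp [addSafe]; omega)
    · simp only [List.mem_singleton] at h
      subst h; simp [addSafe]
  · intro j hj
    simp only [addSafe, List.length_append, List.length_singleton] at hj
    rcases lt_or_ge j s.E.length with h | h
    · rcases hi j h with h' | h'
      · exact Or.inl (by rwa [addSafe, List.getD_append _ _ _ _ h])
      · exact Or.inr h'
    · have hj' : j = s.E.length := by omega
      subst hj'
      left
      rw [addSafe]
      have : (s.E ++ [max s.len (β s.E.length)]).getD s.E.length 0 = max s.len (β s.E.length) := by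
        rw [List.getD_append_right _ _ _ _ le_rfl]
        simp
      rw [this]
      exact le_max_right _ _

lemma addSafe_A (β : ℕ → ℕ) (s : MSt) : (addSafe β s).A = s.A := rfl
lemma addSafe_len (β : ℕ → ℕ) (s : MSt) : (addSafe β s).E.length = s.E.length + 1 := by
  simp [addSafe]

lemma iter_addSafe_le (β : ℕ → ℕ) (s : MSt) (m : ℕ) : MSle s ((addSafe β)^[m] s) := by
  induction m with
  | zero => exact MSle.refl s
  | succ n ih =>
    rw [Function.iterate_succ_apply']
    exact ih.trans (addSafe_le β _)

lemma iter_addSafe_good {β : ℕ → ℕ} {s : MSt} (h : MSgood β s) (m : ℕ) :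
    MSgood β ((addSafe β)^[m] s) := by
  induction m with
  | zero => exact h
  | succ n ih => rw [Function.iterate_succ_apply']; exact addSafe_good ih

lemma iter_addSafe_A (β : ℕ → ℕ) (s : MSt) (m : ℕ) : ((addSafe β)^[m] s).A = s.A := by
  induction m with
  | zero => rfl
  | succ n ih => rw [Function.iterate_succ_apply', addSafe_A, ih]

lemma iter_addSafe_len (β : ℕ → ℕ) (s : MSt) (m : ℕ) :
    ((addSafe β)^[m] s).E.length = s.E.length + m := by
  induction m with
  | zero => rfl
  | succ n ih => rw [Function.iterate_succ_apply', addSafe_len, ih]; omega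

lemma newElems_sorted (u : List Bool) (len : ℕ) : List.Pairwise (· < ·) (newElems u len) := by
  apply List.Pairwise.map
  · intro a b (h : a < b); omega
  · exact (List.pairwise_lt_range (n := u.length)).filter _

lemma newElems_mem {u : List Bool} {len n : ℕ} :
    n ∈ newElems u len ↔ ∃ r, r < u.length ∧ u.getD r false = true ∧ n = r + len := by
  simp only [newElems, List.mem_map, List.mem_filter, List.mem_range]
  constructor
  · rintro ⟨r, ⟨hr, hu⟩, rfl⟩
    exact ⟨r, hr, by simpa using hu, rfl⟩
  · rintro ⟨r, hr, hu, rfl⟩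
    exact ⟨r, ⟨hr, by simpa using hu⟩, rfl⟩

lemma newElems_ge {u : List Bool} {len n : ℕ} (h : n ∈ newElems u len) : len ≤ n := by
  obtain ⟨r, _, _, rfl⟩ := newElems_mem.1 h
  omega

lemma newElems_lt {u : List Bool} {len n : ℕ} (h : n ∈ newElems u len) : n < len + u.length := by
  obtain ⟨r, hr, _, rfl⟩ := newElems_mem.1 h
  omega

lemma appendU_le {u : List Bool} {s : MSt} : MSle s (appendU u s) := by
  refine ⟨by simp [appendU], ⟨_, rfl⟩, subset_union_left, fun x hx => ?_⟩
  rcases List.mem_append.1 hx with h | h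
  · exact Or.inl h
  · exact Or.inr (newElems_ge h)

lemma appendU_good {β : ℕ → ℕ} {u : List Bool} {s : MSt} (h : MSgood β s) :
    MSgood β (appendU u s) := by
  obtain ⟨hs, hb, hi⟩ := h
  refine ⟨?_, ?_, ?_⟩
  · rw [appendU, List.pairwise_append]
    exact ⟨hs, newElems_sorted u s.len,
      fun a ha b hb' => lt_of_lt_of_le (hb a ha) (newElems_ge hb')⟩
  · intro x hx
    rcases List.mem_append.1 hx with h | h
    · have := hb x h; simp [appendU]; omega
    · have := newElems_lt h; simp [appendU]; omega
  · intro j hj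
    simp only [appendU, List.length_append] at hj ⊢
    rcases lt_or_ge j s.E.length with h | h
    · rcases hi j h with h' | h'
      · exact Or.inl (by rwa [List.getD_append _ _ _ _ h])
      · exact Or.inr (Or.inl h')
    · exact Or.inr (Or.inr ⟨h, by omega⟩)


-- ############ new part
lemma appendU_A (u : List Bool) (s : MSt) :
    (appendU u s).A = s.A ∪ Set.Ico s.E.length (s.E.length + (newElems u s.len).length) := rfl

lemma appendU_len_ge (u : List Bool) (s : MSt) : s.E.length ≤ (appendU u s).E.length := by
  simp [appendU]

lemma doMove_m_target (β : ℕ → ℕ) (σ : St) (i : Bool) (u : List Bool) :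
    (doMove β σ i u).m i =
      addSafe β (appendU u ((addSafe β)^[σ.c - (σ.m i).E.length] (σ.m i))) := by
  simp [doMove]

lemma doMove_m_other (β : ℕ → ℕ) (σ : St) (i i' : Bool) (u : List Bool) (h : i' ≠ i) :
    (doMove β σ i u).m i' = σ.m i' := by
  simp [doMove, h]

lemma doMove_c (β : ℕ → ℕ) (σ : St) (i : Bool) (u : List Bool) :
    (doMove β σ i u).c =
      (appendU u ((addSafe β)^[σ.c - (σ.m i).E.length] (σ.m i))).E.length := rfl

lemma doMove_le (β : ℕ → ℕ) (σ : St) (i : Bool) (u : List Bool) :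
    (∀ i', MSle (σ.m i') ((doMove β σ i u).m i')) ∧ σ.c ≤ (doMove β σ i u).c := by
  constructor
  · intro i'
    by_cases h : i' = i
    · subst h
      rw [doMove_m_target]
      exact ((iter_addSafe_le β _ _).trans appendU_le).trans (addSafe_le β _)
    · rw [doMove_m_other β σ i i' u h]
      exact MSle.refl _
  · rw [doMove_c]
    calc σ.c ≤ ((addSafe β)^[σ.c - (σ.m i).E.length] (σ.m i)).E.length := by
            rw [iter_addSafe_len]; omega
      _ ≤ _ := appendU_len_ge _ _

lemma doMove_good {β : ℕ → ℕ} {σ : St} (h : Stgood β σ) (i : Bool) (u : List Bool) :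
    Stgood β (doMove β σ i u) := by
  obtain ⟨hg, hc, hd⟩ := h
  have hs1len : σ.c ≤ ((addSafe β)^[σ.c - (σ.m i).E.length] (σ.m i)).E.length := by
    rw [iter_addSafe_len]; omega
  refine ⟨?_, ?_, ?_⟩
  · intro i'
    by_cases hii : i' = i
    · subst hii
      rw [doMove_m_target]
      exact addSafe_good (appendU_good (iter_addSafe_good (hg i') _))
    · rw [doMove_m_other β σ i i' u hii]; exact hg i'
  · intro i' j hj
    by_cases hii : i' = i
    · subst hii
      rw [doMove_m_target] at hj
      rw [addSafe_A, appendU_A, iter_addSafe_A] at hj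
      rw [doMove_c]
      rcases hj with hj | hj
      · exact lt_of_lt_of_le (lt_of_lt_of_le (hc i' j hj) hs1len) (appendU_len_ge _ _)
      · simp only [Set.mem_Ico] at hj
        simp [appendU]
        omega
    · rw [doMove_m_other β σ i i' u hii] at hj
      rw [doMove_c]
      exact lt_of_lt_of_le (lt_of_lt_of_le (hc i' j hj) hs1len) (appendU_len_ge _ _)
  · -- disjointness
    have key : ∀ j, j ∈ ((doMove β σ i u).m i).A → j ∈ (σ.m i).A ∨ σ.c ≤ j := by
      intro j hj
      rw [doMove_m_target, addSafe_A, appendU_A, iter_addSafe_A] at hj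
      rcases hj with hj | hj
      · exact Or.inl hj
      · simp only [Set.mem_Ico] at hj
        exact Or.inr (le_trans hs1len hj.1)
    ext j
    simp only [Set.mem_inter_iff, Set.mem_empty_iff_false, iff_false]
    rintro ⟨h1, h2⟩
    cases i
    · -- i = false : m true unchanged
      rw [doMove_m_other β σ false true u (by simp)] at h1
      rcases key j h2 with hj | hj
      · have : j ∈ (σ.m true).A ∩ (σ.m false).A := ⟨h1, hj⟩
        rw [hd] at this; exact this
      · exact absurd (hc true j h1) (by omega)
    · rw [doMove_m_other β σ true false u (by simp)] at h2
      rcases key j h1 with hj | hj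
      · have : j ∈ (σ.m true).A ∩ (σ.m false).A := ⟨hj, h2⟩
        rw [hd] at this; exact this
      · exact absurd (hc false j h2) (by omega)

lemma doMove_len_target (β : ℕ → ℕ) (σ : St) (i : Bool) (u : List Bool) :
    ((σ.m i)).E.length + 1 ≤ ((doMove β σ i u).m i).E.length := by
  rw [doMove_m_target, addSafe_len]
  have h1 : (σ.m i).E.length ≤ ((addSafe β)^[σ.c - (σ.m i).E.length] (σ.m i)).E.length := by
    rw [iter_addSafe_len]; omega
  have h2 := appendU_len_ge u ((addSafe β)^[σ.c - (σ.m i).E.length] (σ.m i))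
  omega


-- tokens
def nxt (w : CS) (p : ℕ) : ℕ :=
  if h : ∃ q, p ≤ q ∧ w q = false then Nat.find h else p

def posAfter (w : CS) : ℕ → ℕ
  | 0 => 0
  | k+1 => nxt w (posAfter w k) + 1

def tok (w : CS) (k : ℕ) : ℕ := nxt w (posAfter w k) - posAfter w k

def Valid (w : CS) (k : ℕ) : Prop := ∀ j < k, ∃ q, posAfter w j ≤ q ∧ w q = false

lemma nxt_ge (w : CS) (p : ℕ) : p ≤ nxt w p := by
  rw [nxt]
  split
  · next h => exact (Nat.find_spec h).1
  · exact le_rfl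

lemma nxt_eq_of_ex {w : CS} {p : ℕ} (h : ∃ q, p ≤ q ∧ w q = false) :
    nxt w p = Nat.find h := by rw [nxt, dif_pos h]

lemma nxt_false {w : CS} {p : ℕ} (h : ∃ q, p ≤ q ∧ w q = false) : w (nxt w p) = false := by
  rw [nxt_eq_of_ex h]; exact (Nat.find_spec h).2

lemma nxt_min {w : CS} {p q : ℕ} (h : ∃ q, p ≤ q ∧ w q = false)
    (h1 : p ≤ q) (h2 : q < nxt w p) : w q = true := by
  rw [nxt_eq_of_ex h] at h2
  have := Nat.find_min h h2
  simp only [not_and] at this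
  have := this h1
  simpa using this

lemma posAfter_lt_succ (w : CS) (k : ℕ) : posAfter w k < posAfter w (k+1) := by
  show posAfter w k < nxt w (posAfter w k) + 1
  have := nxt_ge w (posAfter w k); omega

lemma posAfter_mono (w : CS) {k k' : ℕ} (h : k ≤ k') : posAfter w k ≤ posAfter w k' := by
  induction k' with
  | zero => simp_all
  | succ n ih =>
    rcases Nat.lt_or_ge k (n+1) with h' | h'
    · exact le_trans (ih (by omega)) (le_of_lt (posAfter_lt_succ w n))
    · have : k = n + 1 := by omega
      subst this; exact le_rfl

lemma Valid.mono {w : CS} {k k' : ℕ} (h : Valid w k') (hk : k ≤ k') : Valid w k :=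
  fun j hj => h j (by omega)

lemma nxt_agree {w w' : CS} {P p : ℕ} (hP : ∀ n < P, w' n = w n)
    (h : ∃ q, p ≤ q ∧ w q = false) (hlt : nxt w p < P) : nxt w' p = nxt w p := by
  have h' : ∃ q, p ≤ q ∧ w' q = false :=
    ⟨nxt w p, nxt_ge w p, by rw [hP _ hlt]; exact nxt_false h⟩
  rw [nxt_eq_of_ex h']
  apply le_antisymm
  · exact Nat.find_min' h' ⟨nxt_ge w p, by rw [hP _ hlt]; exact nxt_false h⟩
  · by_contra hc
    push_neg at hc
    have hspec := Nat.find_spec h'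
    have hlt2 : Nat.find h' < P := by omega
    have := nxt_min h hspec.1 hc
    rw [← hP _ hlt2] at this
    rw [hspec.2] at this
    exact Bool.false_ne_true this

/-- agreement below P transfers posAfter/Valid/tok -/
lemma agree_chain {w w' : CS} {P : ℕ} (hP : ∀ n < P, w' n = w n) :
    ∀ k, Valid w k → posAfter w k ≤ P →
    posAfter w' k = posAfter w k ∧ Valid w' k ∧ ∀ j < k, tok w' j = tok w j := by
  intro k
  induction k with
  | zero => exact fun _ _ => ⟨rfl, fun j hj => absurd hj (by omega), fun j hj => absurd hj (by omega)⟩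
  | succ m ih =>
    intro hV hple
    have hple' : posAfter w m ≤ P := le_trans (posAfter_mono w (by omega)) hple
    obtain ⟨hpos, hval, htok⟩ := ih (hV.mono (by omega)) hple'
    have hex : ∃ q, posAfter w m ≤ q ∧ w q = false := hV m (by omega)
    have hnxtlt : nxt w (posAfter w m) < P := by
      have : posAfter w (m+1) = nxt w (posAfter w m) + 1 := rfl
      omega
    have hnxt : nxt w' (posAfter w m) = nxt w (posAfter w m) := nxt_agree hP hex hnxtlt
    have hpos' : posAfter w' (m+1) = posAfter w (m+1) := by
      show nxt w' (posAfter w' m) + 1 = nxt w (posAfter w m) + 1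
      rw [hpos, hnxt]
    refine ⟨hpos', ?_, ?_⟩
    · intro j hj
      rcases Nat.lt_or_ge j m with h' | h'
      · exact hval j h'
      · have hjm : j = m := by omega
        subst hjm
        exact ⟨nxt w (posAfter w j), by rw [hpos]; exact nxt_ge w _,
          by rw [hP _ hnxtlt]; exact nxt_false hex⟩
    · intro j hj
      rcases Nat.lt_or_ge j m with h' | h'
      · exact htok j h'
      · have hjm : j = m := by omega
        subst hjm
        show nxt w' (posAfter w' j) - posAfter w' j = nxt w (posAfter w j) - posAfter w j
        rw [hpos, hnxt]

-- the unary encoding of a list of tokens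
def enc : List ℕ → ℕ → Bool
  | [], _ => false
  | t :: ts, n => if n < t then true else if n = t then false else enc ts (n - t - 1)

lemma enc_lemma : ∀ (L : List ℕ) (k Q : ℕ) (w : CS),
    (∀ n, Q ≤ n → w n = enc L (n - Q)) → posAfter w k = Q → Valid w k →
    (∀ j ≤ L.length, Valid w (k + j)) ∧ (∀ j < L.length, tok w (k + j) = L.getD j 0) := by
  intro L
  induction L with
  | nil =>
    intro k Q w hw hpos hval
    refine ⟨fun j hj => ?_, fun j hj => absurd hj (by simp)⟩
    have hj0 : j = 0 := by simpa using hj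
    subst hj0
    simpa using hval
  | cons t ts ih =>
    intro k Q w hw hpos hval
    have hfalse : w (Q + t) = false := by
      rw [hw _ (by omega)]
      simp [enc]
    have hex : ∃ q, posAfter w k ≤ q ∧ w q = false := ⟨Q + t, by omega, hfalse⟩
    have hnxt : nxt w (posAfter w k) = Q + t := by
      rw [nxt_eq_of_ex hex]
      apply le_antisymm
      · exact Nat.find_min' hex ⟨by omega, hfalse⟩
      · rw [Nat.le_find_iff]
        intro m hm
        rintro ⟨hm1, hm2⟩
        rw [hpos] at hm1
        rw [hw _ hm1] at hm2
        have : m - Q < t := by omega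
        simp [enc, this] at hm2
    have htok : tok w k = t := by
      show nxt w (posAfter w k) - posAfter w k = t
      rw [hnxt, hpos]; omega
    have hpos1 : posAfter w (k+1) = Q + t + 1 := by
      show nxt w (posAfter w k) + 1 = Q + t + 1
      rw [hnxt]
    have hval1 : Valid w (k+1) := by
      intro j hj
      rcases Nat.lt_or_ge j k with h' | h'
      · exact hval j h'
      · have : j = k := by omega
        subst this
        exact ⟨Q + t, by omega, hfalse⟩
    have hw' : ∀ n, Q + t + 1 ≤ n → w n = enc ts (n - (Q + t + 1)) := by
      intro n hn
      rw [hw _ (by omega)]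
      have h1 : ¬ (n - Q < t) := by omega
      have h2 : ¬ (n - Q = t) := by omega
      simp only [enc, if_neg h1, if_neg h2]
      congr 1
      omega
    obtain ⟨ihv, iht⟩ := ih (k+1) (Q+t+1) w hw' hpos1 hval1
    constructor
    · intro j hj
      match j with
      | 0 => simpa using hval
      | j'+1 =>
        have := ihv j' (by simpa using hj)
        rwa [show k + (j'+1) = (k+1) + j' by omega]
    · intro j hj
      match j with
      | 0 => simpa using htok
      | j'+1 =>
        have h2 := iht j' (by simpa using hj)
        rw [show k + (j'+1) = (k+1) + j' by omega, h2]
        simp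

lemma exists_k0 {w : CS} {P : ℕ} (hw : w P = false) :
    ∃ k, Valid w k ∧ posAfter w k = P + 1 := by
  have key : ∀ p, p ≤ P + 1 → ∃ k, Valid w k ∧ p ≤ posAfter w k ∧ posAfter w k ≤ P + 1 := by
    intro p
    induction p with
    | zero => exact fun _ => ⟨0, fun j hj => absurd hj (by omega), by omega, by
        show (0:ℕ) ≤ P + 1; omega⟩
    | succ n ih =>
      intro hn
      obtain ⟨k, hk1, hk2, hk3⟩ := ih (by omega)
      rcases Nat.lt_or_ge (posAfter w k) (n+1) with h' | h'
      · have hpk : posAfter w k = n := by omega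
        have hex : ∃ q, posAfter w k ≤ q ∧ w q = false := ⟨P, by omega, hw⟩
        have h1 : nxt w (posAfter w k) ≤ P := by
          rw [nxt_eq_of_ex hex]
          exact Nat.find_min' hex ⟨by omega, hw⟩
        refine ⟨k + 1, ?_, ?_, ?_⟩
        · intro j hj
          rcases Nat.lt_or_ge j k with h'' | h''
          · exact hk1 j h''
          · have : j = k := by omega
            subst this; exact hex
        · show n + 1 ≤ nxt w (posAfter w k) + 1
          have := nxt_ge w (posAfter w k); omega
        · show nxt w (posAfter w k) + 1 ≤ P + 1
          omega
      · exact ⟨k, hk1, h', hk3⟩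
  obtain ⟨k, h1, h2, h3⟩ := key (P+1) le_rfl
  exact ⟨k, h1, by omega⟩

def pExt (w₀ : CS) (P : ℕ) (L : List ℕ) : CS := fun n =>
  if n < P then w₀ n else if n = P then false else enc L (n - P - 1)

lemma pExt_agree (w₀ : CS) (P : ℕ) (L L' : List ℕ) :
    ∀ n < P + 1, pExt w₀ P L n = pExt w₀ P L' n := by
  intro n hn
  rcases Nat.lt_or_ge n P with h | h
  · simp [pExt, h]
  · have : n = P := by omega
    subst this; simp [pExt]

lemma pExt_false (w₀ : CS) (P : ℕ) (L : List ℕ) : pExt w₀ P L P = false := by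
  simp [pExt]

lemma pExt_tail (w₀ : CS) (P : ℕ) (L : List ℕ) :
    ∀ n, P + 1 ≤ n → pExt w₀ P L n = enc L (n - (P + 1)) := by
  intro n hn
  have h1 : ¬ n < P := by omega
  have h2 : ¬ n = P := by omega
  simp only [pExt, if_neg h1, if_neg h2]
  congr 1


-- ######## Part 4: moves, states, cylinders, genericity

def code (i : Bool) (u : List Bool) : ℕ := 2 * Encodable.encode u + (if i then 1 else 0)

def decMove (n : ℕ) : Bool × List Bool :=
  (decide (n % 2 = 1), (Encodable.decode (α := List Bool) (n / 2)).getD [])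

lemma decMove_code (i : Bool) (u : List Bool) : decMove (code i u) = (i, u) := by
  have hlt : (if i then 1 else 0) < 2 := by cases i <;> simp
  have h2 : (code i u) / 2 = Encodable.encode u := by
    unfold code; omega
  have hmod : (code i u) % 2 = (if i then 1 else 0) := by
    unfold code; omega
  unfold decMove
  rw [h2, Encodable.encodek, hmod]
  cases i <;> simp

def step (β : ℕ → ℕ) (σ : St) (n : ℕ) : St := doMove β σ (decMove n).1 (decMove n).2

def start : St := ⟨fun _ => ⟨0, [], ∅⟩, 0⟩

def states (β : ℕ → ℕ) (w : CS) : ℕ → St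
  | 0 => start
  | k+1 => step β (states β w k) (tok w k)

lemma start_good (β : ℕ → ℕ) : Stgood β start := by
  refine ⟨fun i => ⟨by simp [start], by simp [start], by simp [start]⟩, by simp [start], ?_⟩
  simp [start]

lemma states_good (β : ℕ → ℕ) (w : CS) (k : ℕ) : Stgood β (states β w k) := by
  induction k with
  | zero => exact start_good β
  | succ n ih => exact doMove_good ih _ _

lemma states_le (β : ℕ → ℕ) (w : CS) (i : Bool) {k k' : ℕ} (h : k ≤ k') :
    MSle ((states β w k).m i) ((states β w k').m i) := by
  induction k' with
  | zero =>
    have : k = 0 := by omega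
    subst this; exact MSle.refl _
  | succ n ih =>
    rcases Nat.lt_or_ge k (n+1) with h' | h'
    · exact (ih (by omega)).trans ((doMove_le β (states β w n) _ _).1 i)
    · have : k = n + 1 := by omega
      subst this; exact MSle.refl _

lemma states_agree (β : ℕ → ℕ) {w w' : CS} {P k : ℕ} (hP : ∀ n < P, w' n = w n)
    (hV : Valid w k) (hple : posAfter w k ≤ P) : states β w' k = states β w k := by
  obtain ⟨_, _, htok⟩ := agree_chain hP k hV hple
  have key : ∀ m ≤ k, states β w' m = states β w m := by
    intro m
    induction m with
    | zero => intro _; rfl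
    | succ n ih =>
      intro hm
      show step β (states β w' n) (tok w' n) = step β (states β w n) (tok w n)
      rw [ih (by omega), htok n (by omega)]
  exact key k le_rfl

def indE (s : MSt) : CS := fun n => decide (n ∈ s.E)

lemma indE_true_iff {s : MSt} {n : ℕ} : indE s n = true ↔ n ∈ s.E := by
  simp [indE]

def cylS (s : MSt) : Set CS := {y | ∀ n < s.len, y n = indE s n}

lemma bool_eq_of_iff {a b : Bool} (h : (a = true) ↔ (b = true)) : a = b := by
  cases a <;> cases b <;> simp_all

lemma indE_mem_cylS (s : MSt) : indE s ∈ cylS s := fun _ _ => rfl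

lemma cylS_anti {s s' : MSt} (h : MSle s s') : cylS s' ⊆ cylS s := by
  intro y hy n hn
  rw [hy n (lt_of_lt_of_le hn h.1)]
  apply bool_eq_of_iff
  rw [indE_true_iff, indE_true_iff]
  constructor
  · intro hmem
    rcases h.2.2.2 n hmem with h' | h'
    · exact h'
    · omega
  · intro hmem
    exact h.2.1.subset hmem

lemma isOpen_agreeSet (w : CS) (P : ℕ) : IsOpen {w' : CS | ∀ n < P, w' n = w n} := by
  have : {w' : CS | ∀ n < P, w' n = w n}
      = ⋂ n ∈ Finset.range P, (fun w' : CS => w' n) ⁻¹' {w n} := by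
    ext y; simp
  rw [this]
  exact isOpen_biInter_finset fun n _ => (isOpen_discrete _).preimage (continuous_apply n)

lemma isOpen_cylS (s : MSt) : IsOpen (cylS s) := isOpen_agreeSet (indE s) s.len

def SOk (β : ℕ → ℕ) (Φ : St → Prop) : Set CS := {w | ∃ k, Valid w k ∧ Φ (states β w k)}

lemma isOpen_SOk (β : ℕ → ℕ) (Φ : St → Prop) : IsOpen (SOk β Φ) := by
  rw [isOpen_iff_mem_nhds]
  rintro w ⟨k, hV, hΦ⟩
  rw [mem_nhds_iff]
  refine ⟨{w' : CS | ∀ n < posAfter w k, w' n = w n}, ?_, isOpen_agreeSet _ _, fun n _ => rfl⟩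
  intro w' hw'
  refine ⟨k, (agree_chain hw' k hV le_rfl).2.1, ?_⟩
  rwa [states_agree β hw' hV le_rfl]

def xf (β : ℕ → ℕ) (w : CS) (i : Bool) : CS :=
  fun n => decide (∃ k, n ∈ ((states β w k).m i).E)

lemma xf_true_iff {β : ℕ → ℕ} {w : CS} {i : Bool} {n : ℕ} :
    xf β w i n = true ↔ ∃ k, n ∈ ((states β w k).m i).E := by
  simp [xf]

lemma xf_mem_cylS (β : ℕ → ℕ) (w : CS) (i : Bool) (k : ℕ) :
    xf β w i ∈ cylS ((states β w k).m i) := by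
  intro n hn
  apply bool_eq_of_iff
  rw [indE_true_iff, xf_true_iff]
  constructor
  · rintro ⟨k', hk'⟩
    rcases le_or_gt k' k with h | h
    · exact (states_le β w i h).2.1.subset hk'
    · rcases (states_le β w i (le_of_lt h)).2.2.2 n hk' with h' | h'
      · exact h'
      · omega
  · intro h; exact ⟨k, h⟩

lemma exists_ext {D : Set CS} (hDo : IsOpen D) (hDd : Dense D) (s : MSt)
    (hs : ∀ x ∈ s.E, x < s.len) : ∃ u : List Bool, cylS (appendU u s) ⊆ D := by
  obtain ⟨y, hyc, hyD⟩ := hDd.inter_open_nonempty (cylS s) (isOpen_cylS s)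
    ⟨indE s, indE_mem_cylS s⟩
  obtain ⟨I, uu, hIu, hsub⟩ := isOpen_pi_iff.mp hDo y hyD
  set P := max ((I.sup id) + 1) s.len with hP
  obtain ⟨u, hulen, hubit⟩ : ∃ u : List Bool, u.length = P - s.len ∧
      ∀ r, r < u.length → u.getD r false = y (s.len + r) := by
    refine ⟨List.ofFn (fun r : Fin (P - s.len) => y (s.len + r)), List.length_ofFn, ?_⟩
    intro r h
    rw [List.getD_eq_getElem _ _ h, List.getElem_ofFn]
  refine ⟨u, ?_⟩
  have hPlen : s.len ≤ P := le_max_right _ _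
  have hlenP : (appendU u s).len = P := by
    simp only [appendU, hulen]; omega
  have hmatch : ∀ y' ∈ cylS (appendU u s), ∀ a < P, y' a = y a := by
    intro y' hy' a ha
    have ha' : a < (appendU u s).len := by omega
    rw [hy' a ha']
    apply bool_eq_of_iff
    rw [indE_true_iff]
    show a ∈ s.E ++ newElems u s.len ↔ y a = true
    rw [List.mem_append]
    rcases Nat.lt_or_ge a s.len with h | h
    · have h2 : a ∉ newElems u s.len := fun hmem => by have := newElems_ge hmem; omega
      have h3 : y a = indE s a := hyc a h
      rw [h3, indE_true_iff]
      constructor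
      · rintro (h' | h')
        · exact h'
        · exact absurd h' h2
      · exact Or.inl
    · have h2 : a ∉ s.E := fun hmem => by have := hs a hmem; omega
      have hr : a - s.len < u.length := by omega
      have hget : u.getD (a - s.len) false = y a := by
        rw [hubit _ hr]
        congr 1
        omega
      constructor
      · rintro (h' | h')
        · exact absurd h' h2
        · obtain ⟨r, hr1, hr2, hr3⟩ := newElems_mem.1 h'
          have : r = a - s.len := by omega
          subst this
          rw [← hget]; exact hr2
      · intro hy
        refine Or.inr (newElems_mem.2 ⟨a - s.len, hr, ?_, by omega⟩)
        rw [hget]; exact hy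
  intro y' hy'
  apply hsub
  intro a haI
  have haP : a < P := by
    have : a ≤ I.sup id := Finset.le_sup (f := id) haI
    omega
  rw [hmatch y' hy' a haP]
  exact (hIu a haI).2

lemma generic_step (β : ℕ → ℕ) (w₀ : CS) (P : ℕ) :
    ∃ k, ∀ L : List ℕ,
      states β (pExt w₀ P L) k = states β (pExt w₀ P []) k ∧
      (∀ j ≤ L.length, Valid (pExt w₀ P L) (k + j)) ∧
      (∀ j < L.length, tok (pExt w₀ P L) (k + j) = L.getD j 0) := by
  obtain ⟨k, hV, hpos⟩ := exists_k0 (pExt_false w₀ P [])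
  refine ⟨k, fun L => ?_⟩
  have hag : ∀ n < P + 1, pExt w₀ P L n = pExt w₀ P [] n := pExt_agree w₀ P L []
  have h1 := agree_chain hag k hV (le_of_eq hpos)
  have hst := states_agree β hag hV (le_of_eq hpos)
  have hpos' : posAfter (pExt w₀ P L) k = P + 1 := by rw [h1.1, hpos]
  have henc := enc_lemma L k (P+1) (pExt w₀ P L) (pExt_tail w₀ P L) hpos' h1.2.1
  exact ⟨hst, henc.1, henc.2⟩

-- ######## Part 5: density of the generic conditions

lemma dense_SOk_cyl (β : ℕ → ℕ) (i : Bool) {D : Set CS} (hDo : IsOpen D) (hDd : Dense D) :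
    Dense (SOk β (fun σ => cylS (σ.m i) ⊆ D)) := by
  rw [dense_iff_inter_open]
  intro V hVo hVne
  obtain ⟨w₀, hw₀⟩ := hVne
  obtain ⟨I, uu, hIu, hsub⟩ := isOpen_pi_iff.mp hVo w₀ hw₀
  set P := I.sup id + 1 with hP
  obtain ⟨k, hk⟩ := generic_step β w₀ P
  set σ := states β (pExt w₀ P []) k with hσ
  set s1 := (addSafe β)^[σ.c - (σ.m i).E.length] (σ.m i) with hs1
  have hs1good : MSgood β s1 := iter_addSafe_good ((states_good β _ k).1 i) _
  obtain ⟨u, hu⟩ := exists_ext hDo hDd s1 hs1good.2.1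
  set w2 := pExt w₀ P [code i u] with hw2
  obtain ⟨hst, hval, htok⟩ := hk [code i u]
  refine ⟨w2, ?_, ⟨k + 1, hval 1 (by simp), ?_⟩⟩
  · apply hsub
    intro a haI
    have haP : a < P := by
      have : a ≤ I.sup id := Finset.le_sup (f := id) haI
      omega
    have : w2 a = w₀ a := by simp [hw2, pExt, haP]
    rw [this]
    exact (hIu a haI).2
  · have h0 : tok w2 k = code i u := by
      have := htok 0 (by simp)
      simpa using this
    have hstep : states β w2 (k+1) = doMove β σ i u := by
      show step β (states β w2 k) (tok w2 k) = _
      rw [hst, h0]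
      show doMove β σ (decMove (code i u)).1 (decMove (code i u)).2 = doMove β σ i u
      rw [decMove_code]
    show cylS ((states β w2 (k+1)).m i) ⊆ D
    rw [hstep, doMove_m_target]
    exact (cylS_anti (addSafe_le β _)).trans hu

lemma dense_SOk_len (β : ℕ → ℕ) (i : Bool) (mm : ℕ) :
    Dense (SOk β (fun σ => mm ≤ (σ.m i).E.length)) := by
  rw [dense_iff_inter_open]
  intro V hVo hVne
  obtain ⟨w₀, hw₀⟩ := hVne
  obtain ⟨I, uu, hIu, hsub⟩ := isOpen_pi_iff.mp hVo w₀ hw₀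
  set P := I.sup id + 1 with hP
  obtain ⟨k, hk⟩ := generic_step β w₀ P
  set L := List.replicate mm (code i []) with hL
  set w2 := pExt w₀ P L with hw2
  obtain ⟨hst, hval, htok⟩ := hk L
  have hLlen : L.length = mm := List.length_replicate
  have grow : ∀ j, j ≤ mm → j ≤ ((states β w2 (k + j)).m i).E.length := by
    intro j
    induction j with
    | zero => intro _; omega
    | succ n ih =>
      intro hn
      have h1 : n ≤ ((states β w2 (k + n)).m i).E.length := ih (by omega)
      have htokn : tok w2 (k + n) = code i [] := by
        have h2 := htok n (by omega)
        rw [h2, hL]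
        rw [List.getD_eq_getElem _ _ (by rw [List.length_replicate]; omega),
          List.getElem_replicate]
      have hstep : states β w2 (k + n + 1) = doMove β (states β w2 (k+n)) i [] := by
        show step β (states β w2 (k+n)) (tok w2 (k+n)) = _
        rw [htokn]
        show doMove β _ (decMove (code i [])).1 (decMove (code i [])).2 = _
        rw [decMove_code]
      rw [show k + (n+1) = k + n + 1 by omega, hstep]
      have := doMove_len_target β (states β w2 (k+n)) i []
      omega
  refine ⟨w2, ?_, ⟨k + mm, hval mm (by omega), grow mm le_rfl⟩⟩
  apply hsub
  intro a haI
  have haP : a < P := by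
    have : a ≤ I.sup id := Finset.le_sup (f := id) haI
    omega
  have : w2 a = w₀ a := by simp [hw2, pExt, haP]
  rw [this]
  exact (hIu a haI).2

-- ######## Part 6: the enumeration of the generic reals

def Ainf (β : ℕ → ℕ) (w : CS) (i : Bool) : Set ℕ := {j | ∃ k, j ∈ ((states β w k).m i).A}

lemma Ainf_disjoint (β : ℕ → ℕ) (w : CS) : Ainf β w true ∩ Ainf β w false = ∅ := by
  ext j
  simp only [Set.mem_inter_iff, Ainf, Set.mem_setOf_eq, Set.mem_empty_iff_false, iff_false,
    not_and]
  rintro ⟨k1, h1⟩ ⟨k2, h2⟩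
  have h1' : j ∈ ((states β w (max k1 k2)).m true).A :=
    (states_le β w true (le_max_left k1 k2)).2.2.1 h1
  have h2' : j ∈ ((states β w (max k1 k2)).m false).A :=
    (states_le β w false (le_max_right k1 k2)).2.2.1 h2
  have hd := (states_good β w (max k1 k2)).2.2
  have : j ∈ ((states β w (max k1 k2)).m true).A ∩ ((states β w (max k1 k2)).m false).A :=
    ⟨h1', h2'⟩
  rw [hd] at this
  exact this

lemma xf_spec (β : ℕ → ℕ) (w : CS) (i : Bool)
    (hinf : ∀ m : ℕ, ∃ k, m ≤ ((states β w k).m i).E.length) :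
    ∃ e : ℕ → ℕ, StrictMono e ∧ supp (xf β w i) = Set.range e ∧
      (∀ j, β j ≤ e j ∨ j ∈ Ainf β w i) ∧ (∀ n, enum (supp (xf β w i)) n = e n) := by
  classical
  choose K hK using hinf
  have hpre : ∀ {k k' : ℕ}, k ≤ k' →
      ((states β w k).m i).E <+: ((states β w k').m i).E :=
    fun h => (states_le β w i h).2.1
  have hagree : ∀ {k k' : ℕ} {j : ℕ}, j < ((states β w k).m i).E.length →
      j < ((states β w k').m i).E.length →
      ((states β w k).m i).E.getD j 0 = ((states β w k').m i).E.getD j 0 := by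
    intro k k' j h1 h2
    rcases le_total k k' with h | h
    · obtain ⟨t, ht⟩ := hpre h
      rw [← ht, List.getD_append _ _ _ _ h1]
    · obtain ⟨t, ht⟩ := hpre h
      rw [← ht, List.getD_append _ _ _ _ h2]
  set e : ℕ → ℕ := fun j => ((states β w (K (j+1))).m i).E.getD j 0 with he
  have hlenK : ∀ j, j < ((states β w (K (j+1))).m i).E.length :=
    fun j => lt_of_lt_of_le (by omega) (hK (j+1))
  have he_stage : ∀ j k, j < ((states β w k).m i).E.length →
      e j = ((states β w k).m i).E.getD j 0 :=
    fun j k h => hagree (hlenK j) h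
  have hsorted : ∀ k, List.Pairwise (· < ·) ((states β w k).m i).E :=
    fun k => ((states_good β w k).1 i).1
  have hmono : StrictMono e := by
    intro j j' hjj
    have h2 : j' < ((states β w (K (j'+1))).m i).E.length := hlenK j'
    have h1 : j < ((states β w (K (j'+1))).m i).E.length := by omega
    rw [he_stage j _ h1, he_stage j' _ h2,
      List.getD_eq_getElem _ _ h1, List.getD_eq_getElem _ _ h2]
    exact List.pairwise_iff_getElem.1 (hsorted _) _ _ _ _ hjj
  have hsupp : supp (xf β w i) = Set.range e := by
    ext n
    show xf β w i n = true ↔ _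
    rw [xf_true_iff]
    constructor
    · rintro ⟨k, hk⟩
      obtain ⟨j, hj, hjn⟩ := List.mem_iff_getElem.1 hk
      refine ⟨j, ?_⟩
      rw [he_stage j k hj, List.getD_eq_getElem _ _ hj, hjn]
    · rintro ⟨j, rfl⟩
      refine ⟨K (j+1), ?_⟩
      have : e j = ((states β w (K (j+1))).m i).E.getD j 0 := rfl
      rw [this, List.getD_eq_getElem _ _ (hlenK j)]
      exact List.getElem_mem _
  have hsafe : ∀ j, β j ≤ e j ∨ j ∈ Ainf β w i := by
    intro j
    rcases ((states_good β w (K (j+1))).1 i).2.2 j (hlenK j) with h | h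
    · left
      rw [he_stage j _ (hlenK j)]
      exact h
    · right; exact ⟨K (j+1), h⟩
  have henum : ∀ n, enum (supp (xf β w i)) n = e n := by
    intro n
    have hcnt : Nat.count (· ∈ supp (xf β w i)) (e n) = n := by
      rw [Nat.count_eq_card_filter_range]
      have himg : (Finset.range (e n)).filter (· ∈ supp (xf β w i)) = (Finset.range n).image e := by
        ext m
        simp only [Finset.mem_filter, Finset.mem_range, Finset.mem_image, hsupp, Set.mem_range]
        constructor
        · rintro ⟨hm, j, rfl⟩
          exact ⟨j, hmono.lt_iff_lt.1 hm, rfl⟩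
        · rintro ⟨j, hj, rfl⟩
          exact ⟨hmono hj, j, rfl⟩
      rw [himg, Finset.card_image_of_injective _ hmono.injective, Finset.card_range]
    have hpn : (fun q => q ∈ supp (xf β w i)) (e n) := by
      rw [hsupp]; exact ⟨n, rfl⟩
    have h2 := Nat.nth_count hpn
    rw [hcnt] at h2
    exact h2
  exact ⟨e, hmono, hsupp, hsafe, henum⟩

-- ######## Part 7: category lemmas

lemma compl_denseOpen_meagre {D : Set CS} (ho : IsOpen D) (hd : Dense D) : IsMeagre Dᶜ := by
  rw [IsMeagre, compl_compl]
  exact mem_residual_iff.mpr ⟨{D}, by simpa using ho, by simpa using hd,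
    Set.countable_singleton D, by simp⟩

lemma not_univ_meagre : ¬ IsMeagre (Set.univ : Set CS) := by
  intro h
  rw [IsMeagre, Set.compl_univ] at h
  obtain ⟨x, hx⟩ := (dense_of_mem_residual h).nonempty
  exact hx

lemma sUnion_meagre_countable {𝓝 : Set (Set CS)} (hc : 𝓝.Countable)
    (hm : ∀ M ∈ 𝓝, IsMeagre M) : IsMeagre (⋃₀ 𝓝) := by
  rw [IsMeagre, Set.compl_sUnion]
  exact (countable_sInter_mem (hc.image _)).mpr (by rintro s ⟨t, ht, rfl⟩; exact hm t ht)

lemma singleton_meagre (x : CS) : IsMeagre ({x} : Set CS) := by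
  rw [IsMeagre]
  refine mem_residual_iff.mpr ⟨{({x}ᶜ : Set CS)}, ?_, ?_, Set.countable_singleton _, by simp⟩
  · intro t ht
    simp only [Set.mem_singleton_iff] at ht
    subst ht
    exact isOpen_compl_singleton
  · intro t ht
    simp only [Set.mem_singleton_iff] at ht
    subst ht
    rw [dense_compl_singleton_iff_not_open]
    intro hop
    obtain ⟨I, uu, hIu, hsub⟩ := isOpen_pi_iff.mp hop x rfl
    set y : CS := Function.update x (I.sup id + 1) (!(x (I.sup id + 1))) with hy
    have hyin : y ∈ Set.pi (↑I : Set ℕ) uu := by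
      intro a haI
      have hne : a ≠ I.sup id + 1 := by
        have h := Finset.le_sup (f := id) haI
        simp only [id] at h
        omega
      rw [hy, Function.update_of_ne hne]
      exact (hIu a haI).2
    have heq : y = x := hsub hyin
    have : y (I.sup id + 1) = x (I.sup id + 1) := by rw [heq]
    rw [hy, Function.update_self] at this
    exact (Bool.not_ne_self _) this

-- ######## Part 8: covM is uncountable

lemma aleph0_lt_covM : ℵ₀ < covM := by
  classical
  have hsingfam : ∀ M ∈ Set.range (fun x : CS => ({x} : Set CS)), IsMeagre M := by
    rintro M ⟨x, rfl⟩
    exact singleton_meagre x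
  have hsingcov : ⋃₀ (Set.range fun x : CS => ({x} : Set CS)) = Set.univ := by
    ext y
    simp only [Set.mem_sUnion, Set.mem_range, Set.mem_univ, iff_true]
    exact ⟨{y}, ⟨y, rfl⟩, rfl⟩
  have hne : {c | ∃ 𝓜 : Set (Set CS), (∀ M ∈ 𝓜, IsMeagre M) ∧ ⋃₀ 𝓜 = Set.univ ∧
      #(↥𝓜) = c}.Nonempty :=
    ⟨_, ⟨Set.range fun x : CS => ({x} : Set CS), hsingfam, hsingcov, rfl⟩⟩
  have hbig : ∀ c ∈ {c | ∃ 𝓜 : Set (Set CS), (∀ M ∈ 𝓜, IsMeagre M) ∧ ⋃₀ 𝓜 = Set.univ ∧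
      #(↥𝓜) = c}, ℵ₁ ≤ c := by
    rintro c ⟨𝓝, hm, hu, rfl⟩
    by_contra hlt
    rw [not_le] at hlt
    have hc : 𝓝.Countable := (Cardinal.countable_iff_lt_aleph_one 𝓝).2 hlt
    have : IsMeagre (Set.univ : Set CS) := hu ▸ sUnion_meagre_countable hc hm
    exact not_univ_meagre this
  calc ℵ₀ < ℵ₁ := Cardinal.aleph0_lt_aleph_one
    _ ≤ covM := le_csInf hne hbig

end S7

theorem stmt7 (U : Ultrafilter ℕ) (hU : IsFreeUltrafilter U) (hbU : bU U = covM)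
    (𝓜 : Set (Set CS)) (h𝓜 : ∀ M ∈ 𝓜, IsMeagre M) (h𝓜card : #(↥𝓜) < covM)
    (Z : Set CS) (hZinf : Z ⊆ NatInf) (hZ : #(↥Z) < covM) :
    ∃ x ∈ NatInf, x ∉ ⋃₀ 𝓜 ∧
      ∀ z ∈ Z, LeU U (enum (supp z)) (enum (supp x)) := by
  classical
  open S7 in
  -- Step 1: a single ≤_U-bound for Z
  have hbound : ∃ b ∈ NatInf, ∀ z ∈ Z, {n | enum (supp z) n < enum (supp b) n} ∈ U := by
    by_contra hcon
    push_neg at hcon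
    have hunb : ∀ b ∈ NatInf, ∃ z ∈ Z, LeU U (enum (supp b)) (enum (supp z)) := by
      intro b hb
      obtain ⟨z, hz, hznot⟩ := hcon b hb
      refine ⟨z, hz, ?_⟩
      have h1 : {n | enum (supp z) n < enum (supp b) n}ᶜ ∈ U :=
        (Ultrafilter.compl_mem_iff_notMem).2 hznot
      have h2 : {n | enum (supp z) n < enum (supp b) n}ᶜ
          = {n | enum (supp b) n ≤ enum (supp z) n} := by
        ext n; simp [not_lt]
      rw [h2] at h1
      exact h1
    have hle : bU U ≤ #(↥Z) := csInf_le' ⟨Z, hZinf, rfl, hunb⟩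
    rw [hbU] at hle
    exact absurd hZ (not_lt.mpr hle)
  obtain ⟨b, hbinf, hbZ⟩ := hbound
  set β := enum (supp b) with hβ
  -- decompose the meager sets
  have hM' : ∀ M : ↥𝓜, ∃ f : ℕ → Set CS, (∀ n, IsOpen (f n)) ∧ (∀ n, Dense (f n)) ∧
      ∀ x : CS, (∀ n, x ∈ f n) → x ∉ (M : Set CS) := by
    intro M
    have hm : IsMeagre (M : Set CS) := h𝓜 M M.2
    rw [IsMeagre, mem_residual_iff] at hm
    obtain ⟨S, hSo, hSd, hSc, hSsub⟩ := hm
    obtain ⟨f, hf⟩ := (hSc.insert Set.univ).exists_eq_range (Set.insert_nonempty _ _)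
    refine ⟨f, ?_, ?_, ?_⟩
    · intro n
      have hmem : f n ∈ insert Set.univ S := by rw [hf]; exact ⟨n, rfl⟩
      rw [Set.mem_insert_iff] at hmem
      rcases hmem with h | h
      · rw [h]; exact isOpen_univ
      · exact hSo _ h
    · intro n
      have hmem : f n ∈ insert Set.univ S := by rw [hf]; exact ⟨n, rfl⟩
      rw [Set.mem_insert_iff] at hmem
      rcases hmem with h | h
      · rw [h]; exact dense_univ
      · exact hSd _ h
    · intro x hx hxM
      have hxS : x ∈ ⋂₀ S := by
        intro t ht
        have : t ∈ insert Set.univ S := Set.mem_insert_of_mem _ ht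
        rw [hf] at this
        obtain ⟨n, rfl⟩ := this
        exact hx n
      exact (hSsub hxS) hxM
  choose F hFo hFd hFm using hM'
  -- the generic real
  have hw : (⋂ j : (↥𝓜 × ℕ × Bool) ⊕ (Bool × ℕ),
      (match j with
        | Sum.inl (M, n, i) => SOk β (fun σ => cylS (σ.m i) ⊆ F M n)
        | Sum.inr (i, m) => SOk β (fun σ => m ≤ (σ.m i).E.length))).Nonempty := by
    set G : (↥𝓜 × ℕ × Bool) ⊕ (Bool × ℕ) → Set CS := fun j =>
      (match j with
        | Sum.inl (M, n, i) => SOk β (fun σ => cylS (σ.m i) ⊆ F M n)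
        | Sum.inr (i, m) => SOk β (fun σ => m ≤ (σ.m i).E.length)) with hG
    have hGo : ∀ j, IsOpen (G j) := by
      rintro (⟨M, n, i⟩ | ⟨i, m⟩) <;> exact isOpen_SOk β _
    have hGd : ∀ j, Dense (G j) := by
      rintro (⟨M, n, i⟩ | ⟨i, m⟩)
      · exact dense_SOk_cyl β i (hFo M n) (hFd M n)
      · exact dense_SOk_len β i m
    by_contra hcon
    rw [Set.not_nonempty_iff_eq_empty] at hcon
    have hcover : ⋃₀ (Set.range fun j => (G j)ᶜ) = Set.univ := by
      rw [Set.sUnion_range]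
      ext x
      simp only [Set.mem_iUnion, Set.mem_compl_iff, Set.mem_univ, iff_true]
      by_contra hx
      push_neg at hx
      have hxin : x ∈ ⋂ j, G j := Set.mem_iInter.2 hx
      rw [hcon] at hxin
      exact hxin
    have hmeag : ∀ s ∈ Set.range fun j => (G j)ᶜ, IsMeagre s := by
      rintro s ⟨j, rfl⟩
      exact compl_denseOpen_meagre (hGo j) (hGd j)
    have h1 : covM ≤ #(↥(Set.range fun j => (G j)ᶜ)) := csInf_le' ⟨_, hmeag, hcover, rfl⟩
    have h2 : #(↥(Set.range fun j => (G j)ᶜ)) ≤ #((↥𝓜 × ℕ × Bool) ⊕ (Bool × ℕ)) :=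
      Cardinal.mk_range_le
    have h3 : #((↥𝓜 × ℕ × Bool) ⊕ (Bool × ℕ)) < covM := by
      set κ := #(↥𝓜) ⊔ ℵ₀ with hκdef
      have hκinf : ℵ₀ ≤ κ := le_sup_right
      have hMκ : #(↥𝓜) ≤ κ := le_sup_left
      have hNκ : #ℕ ≤ κ := le_trans Cardinal.mk_le_aleph0 hκinf
      have hBκ : #Bool ≤ κ := le_trans Cardinal.mk_le_aleph0 hκinf
      have hκκ : κ * κ = κ := Cardinal.mul_eq_self hκinf
      have h4 : #(↥𝓜 × ℕ × Bool) ≤ κ := by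
        rw [Cardinal.mk_prod, Cardinal.mk_prod]
        simp only [Cardinal.lift_id]
        calc #(↥𝓜) * (#ℕ * #Bool) ≤ κ * (κ * κ) := by
              exact mul_le_mul' hMκ (mul_le_mul' hNκ hBκ)
          _ = κ := by rw [hκκ, hκκ]
      have h5 : #(Bool × ℕ) ≤ κ := by
        rw [Cardinal.mk_prod]
        simp only [Cardinal.lift_id]
        calc #Bool * #ℕ ≤ κ * κ := mul_le_mul' hBκ hNκ
          _ = κ := hκκ
      have h6 : #((↥𝓜 × ℕ × Bool) ⊕ (Bool × ℕ)) ≤ κ + κ := by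
        rw [Cardinal.mk_sum]
        simp only [Cardinal.lift_id]
        exact add_le_add h4 h5
      have h7 : κ + κ = κ := Cardinal.add_eq_self hκinf
      have h8 : κ < covM := sup_lt_iff.mpr ⟨h𝓜card, aleph0_lt_covM⟩
      exact lt_of_le_of_lt (h6.trans_eq h7) h8
    exact absurd (h1.trans h2) (not_le.mpr h3)
  obtain ⟨w, hwmem⟩ := hw
  have hwG : ∀ j : (↥𝓜 × ℕ × Bool) ⊕ (Bool × ℕ), w ∈
      (match j with
        | Sum.inl (M, n, i) => SOk β (fun σ => cylS (σ.m i) ⊆ F M n)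
        | Sum.inr (i, m) => SOk β (fun σ => m ≤ (σ.m i).E.length)) :=
    fun j => Set.mem_iInter.1 hwmem j
  have hinf : ∀ i : Bool, ∀ m : ℕ, ∃ k, m ≤ ((states β w k).m i).E.length := by
    intro i m
    obtain ⟨k, _, hk2⟩ := hwG (Sum.inr (i, m))
    exact ⟨k, hk2⟩
  obtain ⟨i, hiU⟩ : ∃ i : Bool, Ainf β w i ∉ U := by
    by_contra hc
    push_neg at hc
    have h1 : Ainf β w true ∩ Ainf β w false ∈ U := inter_mem (hc true) (hc false)
    rw [Ainf_disjoint β w] at h1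
    exact Filter.empty_notMem (U : Filter ℕ) h1
  obtain ⟨e, hemono, hesupp, hesafe, heenum⟩ := xf_spec β w i (hinf i)
  refine ⟨xf β w i, ?_, ?_, ?_⟩
  · show (supp (xf β w i)).Infinite
    rw [hesupp]
    exact Set.infinite_range_of_injective hemono.injective
  · intro hmem
    rw [Set.mem_sUnion] at hmem
    obtain ⟨M, hM, hxM⟩ := hmem
    refine hFm ⟨M, hM⟩ (xf β w i) ?_ hxM
    intro n
    obtain ⟨k, _, hk2⟩ := hwG (Sum.inl (⟨M, hM⟩, n, i))
    exact hk2 (xf_mem_cylS β w i k)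
  · intro z hz
    have h1 : {n | enum (supp z) n < β n} ∈ U := hbZ z hz
    have h2 : (Ainf β w i)ᶜ ∈ U := (Ultrafilter.compl_mem_iff_notMem).2 hiU
    have h3 : {n | enum (supp z) n < β n} ∩ (Ainf β w i)ᶜ ∈ U := inter_mem h1 h2
    refine mem_of_superset h3 ?_
    rintro n ⟨hn1, hn2⟩
    show enum (supp z) n ≤ enum (supp (xf β w i)) n
    rw [heenum n]
    rcases hesafe n with h | h
    · have : enum (supp z) n < β n := hn1
      omega
    · exact absurd h hn2
end
end

section
/- Assume that cov(M) = cof(M) and that the cardinal cov(M) is regular. For every cov(M)-Luzin set X ⊆ ℤ^ℕ, there is a cov(M)-Luzin set Y ⊆ ℤ^ℕ such that the product space X × Y is not Menger. -/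
open Set Filter Cardinal

noncomputable section

namespace Stmt9Aux

/-- Cylinder: points agreeing with `w` below `L`. -/
def cyl (w : ZN) (L : ℕ) : Set ZN := {z | ∀ i < L, z i = w i}

lemma isOpen_cyl (w : ZN) (L : ℕ) : IsOpen (cyl w L) := by
  have h : cyl w L = ⋂ i ∈ Finset.range L, (fun z : ZN => z i) ⁻¹' {w i} := by
    ext z
    simp [cyl]
  rw [h]
  exact isOpen_biInter_finset fun i _ =>
    (continuous_apply i).isOpen_preimage _ (isOpen_discrete _)

lemma mem_cyl_self (w : ZN) (L : ℕ) : w ∈ cyl w L := fun _ _ => rfl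

lemma interior_empty_of_escape {s : Set ZN}
    (h : ∀ z : ZN, ∀ J : Finset ℕ, ∃ z' : ZN, (∀ i ∈ J, z' i = z i) ∧ z' ∉ s) :
    interior s = ∅ := by
  rw [Set.eq_empty_iff_forall_notMem]
  intro z hz
  obtain ⟨I, u, hIu, hsub⟩ := (isOpen_pi_iff.1 isOpen_interior) z hz
  obtain ⟨z', hz'I, hz's⟩ := h z I
  refine hz's (interior_subset (hsub ?_))
  intro i hi
  rw [hz'I i hi]
  exact (hIu i hi).2

lemma escape_lemma {F : Set ZN} (hcl : IsClosed F) (hint : interior F = ∅)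
    (w : ZN) (L : ℕ) :
    ∃ (t : ZN) (L' : ℕ), L ≤ L' ∧ (∀ i < L, t i = w i) ∧ cyl t L' ∩ F = ∅ := by
  have hd : Dense Fᶜ := interior_eq_empty_iff_dense_compl.mp hint
  obtain ⟨z, hzc, hzcyl⟩ := hd.exists_mem_open (isOpen_cyl w L) ⟨w, mem_cyl_self w L⟩
  obtain ⟨I, u, hIu, hsub⟩ := (isOpen_pi_iff.1 hcl.isOpen_compl) z hzc
  refine ⟨z, max L ((I.sup id) + 1), le_max_left _ _, fun i hi => hzcyl i hi, ?_⟩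
  rw [Set.eq_empty_iff_forall_notMem]
  intro q ⟨hq1, hq2⟩
  have : q ∈ Fᶜ := by
    apply hsub
    intro i hi
    have : i < max L ((I.sup id) + 1) := by
      have : i ≤ I.sup id := Finset.le_sup (f := id) hi
      omega
    rw [hq1 i this]
    exact (hIu i hi).2
  exact this hq2

/-- Bounded finitely-supported conditions. -/
def A (n : ℕ) : Set ZN := {w | (∀ i, (w i).natAbs ≤ n) ∧ ∀ i, n ≤ i → w i = 0}

lemma finite_A (n : ℕ) : (A n).Finite := by
  classical
  have : A n ⊆ Set.range (fun v : Fin n → Set.Icc (-(n : ℤ)) n =>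
      (fun i => if h : i < n then (v ⟨i, h⟩ : ℤ) else 0 : ZN)) := by
    intro w hw
    have hb : ∀ i, w i ∈ Set.Icc (-(n : ℤ)) n := by
      intro i
      have h1 : |w i| ≤ (n : ℤ) := by
        rw [Int.abs_eq_natAbs]
        exact_mod_cast hw.1 i
      exact abs_le.mp h1
    refine ⟨fun j => ⟨w j, hb j⟩, ?_⟩
    funext i
    by_cases h : i < n
    · simp [h]
    · simp [h]
      exact (hw.2 i (by omega)).symm
  exact Set.Finite.subset (Set.finite_range _) this

lemma zero_mem_A (n : ℕ) : (fun _ => (0 : ℤ) : ZN) ∈ A n :=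
  ⟨fun _ => by simp, fun _ _ => rfl⟩

/-- two closed sets with empty interior: union has empty interior -/
lemma interior_union_empty {s t : Set ZN} (hs : IsClosed s) (his : interior s = ∅)
    (hit : interior t = ∅) : interior (s ∪ t) = ∅ := by
  by_contra h
  have hU : IsOpen (interior (s ∪ t) \ s) := isOpen_interior.sdiff hs
  have hUt : interior (s ∪ t) \ s ⊆ t := by
    intro z hz
    rcases interior_subset hz.1 with h' | h'
    · exact absurd h' hz.2
    · exact h'
  have h1 : interior (s ∪ t) \ s ⊆ interior t := hU.subset_interior_iff.mpr hUt
  rw [hit, Set.subset_empty_iff, Set.diff_eq_empty] at h1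
  have h2 : interior (s ∪ t) ⊆ interior s := interior_maximal h1 isOpen_interior
  rw [his, Set.subset_empty_iff] at h2
  exact h h2

/-- decomposition of a meagre set into an increasing union of closed nowhere dense sets -/
lemma meagre_decomp {M : Set ZN} (hM : IsMeagre M) :
    ∃ F : ℕ → Set ZN, (∀ k, IsClosed (F k)) ∧ (∀ k, interior (F k) = ∅) ∧
      Monotone F ∧ M ⊆ ⋃ k, F k := by
  obtain ⟨S, hnwd, hcnt, hsub⟩ := isMeagre_iff_countable_union_isNowhereDense.mp hM
  obtain ⟨f, hf⟩ := (hcnt.insert ∅).exists_eq_range ⟨∅, Set.mem_insert _ _⟩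
  have hfnwd : ∀ k, IsNowhereDense (f k) := by
    intro k
    have : f k ∈ insert ∅ S := hf ▸ Set.mem_range_self k
    rcases this with h | h
    · rw [h]; exact isNowhereDense_empty
    · exact hnwd _ h
  set G : ℕ → Set ZN := fun k => Nat.rec (closure (f 0)) (fun j Fj => Fj ∪ closure (f (j + 1))) k
    with hG
  have hint0 : ∀ k, interior (closure (f k)) = ∅ := fun k =>
    (isClosed_closure.isNowhereDense_iff).mp (hfnwd k).closure
  have hcl : ∀ k, IsClosed (G k) := by
    intro k
    induction k with
    | zero => exact isClosed_closure
    | succ j ih => exact ih.union isClosed_closure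
  refine ⟨G, hcl, ?_, ?_, ?_⟩
  · intro k
    induction k with
    | zero => exact hint0 0
    | succ j ih => exact interior_union_empty (hcl j) ih (hint0 (j + 1))
  · refine monotone_nat_of_le_succ ?_
    intro k
    exact Set.subset_union_left
  · intro x hx
    obtain ⟨s, hsS, hxs⟩ := hsub hx
    have : s ∈ insert ∅ S := Set.mem_insert_of_mem _ hsS
    rw [hf] at this
    obtain ⟨k, hk⟩ := this
    have hxk : x ∈ closure (f k) := hk ▸ subset_closure hxs
    refine Set.mem_iUnion.2 ⟨k, ?_⟩
    clear hk
    induction k with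
    | zero => exact hxk
    | succ j _ => exact Set.mem_union_right _ hxk

end Stmt9Aux
namespace Stmt9Aux

/-- The key escaping construction. -/
lemma key_lemma (F : ℕ → Set ZN) (hcl : ∀ k, IsClosed (F k))
    (hint : ∀ k, interior (F k) = ∅) (hmono : Monotone F) :
    ∃ d : ℕ → ℕ, ∀ g : ℕ → ℕ, Monotone g → {n | d n < g n}.Infinite →
      ∃ x : ZN, (∀ i, (x i).natAbs ≤ g i) ∧ x ∉ ⋃ k, F k := by
  classical
  choose t L hL hagree hdisj using fun (n : ℕ) (w : ZN) =>
    escape_lemma (hcl n) (hint n) w n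
  obtain ⟨d, hdL, hdV, hdn⟩ : ∃ d : ℕ → ℕ,
      (∀ n w, w ∈ A n → L n w ≤ d n) ∧
      (∀ n w, w ∈ A n → ∀ i, i < L n w → (t n w i).natAbs ≤ d n) ∧
      (∀ n, n < d n) := by
    refine ⟨fun n => ((finite_A n).toFinset.sup fun w =>
      max (L n w) ((Finset.range (L n w)).sup fun i => (t n w i).natAbs)) + n + 1, ?_, ?_, ?_⟩
    · intro n w hw
      have h1 := Finset.le_sup
        (f := fun w => max (L n w) ((Finset.range (L n w)).sup fun i => (t n w i).natAbs))
        ((finite_A n).mem_toFinset.mpr hw)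
      simp only [sup_le_iff, le_max_iff] at h1 ⊢
      omega
    · intro n w hw i hi
      have h0 : (t n w i).natAbs ≤ (Finset.range (L n w)).sup fun i => (t n w i).natAbs :=
        Finset.le_sup (f := fun i => (t n w i).natAbs) (Finset.mem_range.mpr hi)
      have h1 := Finset.le_sup
        (f := fun w => max (L n w) ((Finset.range (L n w)).sup fun i => (t n w i).natAbs))
        ((finite_A n).mem_toFinset.mpr hw)
      rw [max_le_iff] at h1
      beta_reduce
      omega
    · intro n; beta_reduce; omega
  refine ⟨d, ?_⟩
  intro g hg hinf
  choose nxt hnxtG hnxtgt using fun a : ℕ => hinf.exists_gt a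
  obtain ⟨p, hp0, hps1, hps2⟩ : ∃ p : ℕ → ℕ × ZN,
      (p 0 = (nxt 0, fun _ => (0 : ℤ))) ∧
      (∀ k, (p (k + 1)).1 = nxt (max (d (p k).1) (p k).1)) ∧
      (∀ k i, (p (k + 1)).2 i = if i < L (p k).1 (p k).2 then t (p k).1 (p k).2 i else 0) := by
    refine ⟨fun k => Nat.rec (nxt 0, fun _ => (0 : ℤ))
      (fun _ q => (nxt (max (d q.1) q.1),
        fun i => if i < L q.1 q.2 then t q.1 q.2 i else 0)) k, rfl, fun k => rfl, fun k i => rfl⟩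
  have hG : ∀ k, d (p k).1 < g (p k).1 := by
    intro k
    cases k with
    | zero => rw [hp0]; exact hnxtG 0
    | succ j => rw [hps1 j]; exact hnxtG _
  have hgt : ∀ k, max (d (p k).1) (p k).1 < (p (k + 1)).1 := by
    intro k
    rw [hps1 k]
    exact hnxtgt _
  have hA : ∀ k, (p k).2 ∈ A (p k).1 := by
    intro k
    induction k with
    | zero => rw [hp0]; exact zero_mem_A _
    | succ j ih =>
      have hLd : L (p j).1 (p j).2 ≤ d (p j).1 := hdL _ _ ih
      have hgtj := hgt j
      rw [max_lt_iff] at hgtj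
      constructor
      · intro i
        rw [hps2 j i]
        by_cases hi : i < L (p j).1 (p j).2
        · rw [if_pos hi]
          have := hdV _ _ ih i hi
          omega
        · rw [if_neg hi]
          simp
      · intro i hi
        rw [hps2 j i, if_neg]
        omega
  have hstep_eq : ∀ k i, i < (p k).1 → (p (k + 1)).2 i = (p k).2 i := by
    intro k i hi
    have h1 : i < L (p k).1 (p k).2 := lt_of_lt_of_le hi (hL _ _)
    rw [hps2 k i, if_pos h1]
    exact hagree _ _ i hi
  have hn_mono : ∀ k m, k ≤ m → (p k).1 ≤ (p m).1 := by
    intro k m hkm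
    induction m with
    | zero => cases Nat.le_zero.mp hkm; exact le_rfl
    | succ j ih =>
      rcases Nat.lt_or_ge k (j + 1) with h | h
      · have h1 := ih (Nat.lt_succ_iff.mp h)
        have h2 := hgt j
        rw [max_lt_iff] at h2
        omega
      · have : k = j + 1 := le_antisymm hkm h
        subst this
        exact le_rfl
  have hcoh : ∀ k m, k ≤ m → ∀ i, i < (p k).1 → (p m).2 i = (p k).2 i := by
    intro k m hkm
    induction m with
    | zero => cases Nat.le_zero.mp hkm; intro i _; rfl
    | succ j ih =>
      intro i hi
      rcases Nat.lt_or_ge k (j + 1) with h | h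
      · have hkj : k ≤ j := Nat.lt_succ_iff.mp h
        rw [hstep_eq j i (lt_of_lt_of_le hi (hn_mono k j hkj))]
        exact ih hkj i hi
      · have : k = j + 1 := le_antisymm hkm h
        subst this
        rfl
  have hk_le : ∀ k, k ≤ (p k).1 := by
    intro k
    induction k with
    | zero => exact Nat.zero_le _
    | succ j ih =>
      have h2 := hgt j
      rw [max_lt_iff] at h2
      omega
  have hgb : ∀ k i, ((p k).2 i).natAbs ≤ g i := by
    intro k
    induction k with
    | zero => intro i; rw [hp0]; simp
    | succ j ih =>
      intro i
      by_cases hi : i < (p j).1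
      · rw [hstep_eq j i hi]; exact ih i
      · rw [hps2 j i]
        by_cases hi2 : i < L (p j).1 (p j).2
        · rw [if_pos hi2]
          have h1 : (t (p j).1 (p j).2 i).natAbs ≤ d (p j).1 := hdV _ _ (hA j) i hi2
          have h2 : d (p j).1 < g (p j).1 := hG j
          have h3 : g (p j).1 ≤ g i := hg (by omega)
          omega
        · rw [if_neg hi2]
          simp
  obtain ⟨x, hxdef⟩ : ∃ x : ZN, ∀ i, x i = (p (i + 1)).2 i :=
    ⟨fun i => (p (i + 1)).2 i, fun i => rfl⟩
  have hx_agree : ∀ k i, i < (p (k + 1)).1 → x i = (p (k + 1)).2 i := by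
    intro k i hi
    rw [hxdef i]
    rcases Nat.le_total (i + 1) (k + 1) with h | h
    · exact (hcoh (i + 1) (k + 1) h i (lt_of_lt_of_le (Nat.lt_succ_self i) (hk_le (i + 1)))).symm
    · exact hcoh (k + 1) (i + 1) h i hi
  refine ⟨x, fun i => by rw [hxdef i]; exact hgb (i + 1) i, ?_⟩
  intro hxmem
  obtain ⟨j, hj⟩ : ∃ j, x ∈ F j := by
    obtain ⟨s, ⟨j, rfl⟩, hmem⟩ := hxmem
    exact ⟨j, hmem⟩
  have hxFnj : x ∉ F (p j).1 := by
    have hcylx : x ∈ cyl (t (p j).1 (p j).2) (L (p j).1 (p j).2) := by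
      intro i hi
      have hiL : i < (p (j + 1)).1 := by
        have h1 : L (p j).1 (p j).2 ≤ d (p j).1 := hdL _ _ (hA j)
        have h2 := hgt j
        rw [max_lt_iff] at h2
        omega
      rw [hx_agree j i hiL, hps2 j i, if_pos hi]
    intro hmem
    have hq : x ∈ cyl (t (p j).1 (p j).2) (L (p j).1 (p j).2) ∩ F (p j).1 := ⟨hcylx, hmem⟩
    rw [hdisj] at hq
    exact hq
  exact hxFnj (hmono (hk_le j) hj)

end Stmt9Aux
namespace Stmt9Aux

lemma meagre_of_closed_int_empty {s : Set ZN} (hcl : IsClosed s) (hint : interior s = ∅) :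
    IsMeagre s := by
  rw [isMeagre_iff_countable_union_isNowhereDense]
  refine ⟨{s}, ?_, Set.countable_singleton _, by rw [Set.sUnion_singleton]⟩
  intro t ht
  rw [Set.mem_singleton_iff] at ht
  subst ht
  exact hcl.isNowhereDense_iff.mpr hint

lemma bounded_meagre (g : ℕ → ℕ) : IsMeagre {x : ZN | ∀ i, (x i).natAbs ≤ g i} := by
  refine meagre_of_closed_int_empty ?_ ?_
  · have h : {x : ZN | ∀ i, (x i).natAbs ≤ g i} =
        ⋂ i, (fun z : ZN => z i) ⁻¹' {q : ℤ | q.natAbs ≤ g i} := by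
      ext z; simp
    rw [h]
    exact isClosed_iInter fun i =>
      IsClosed.preimage (continuous_apply i) (isClosed_discrete _)
  · refine interior_empty_of_escape ?_
    intro z J
    obtain ⟨j, hj⟩ := Infinite.exists_notMem_finset J
    refine ⟨Function.update z j ((g j : ℤ) + 1), ?_, ?_⟩
    · intro i hi
      exact Function.update_of_ne (by rintro rfl; exact hj hi) _ _
    · intro hmem
      have := hmem j
      rw [Function.update_self] at this
      have h2 : ((g j : ℤ) + 1).natAbs = g j + 1 := by
        have : ((g j : ℤ) + 1) = ((g j + 1 : ℕ) : ℤ) := by push_cast; ring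
        rw [this, Int.natAbs_natCast]
      omega

lemma singleton_meagre (v : ZN) : IsMeagre ({v} : Set ZN) := by
  refine meagre_of_closed_int_empty isClosed_singleton ?_
  refine interior_empty_of_escape ?_
  intro z J
  obtain ⟨j, hj⟩ := Infinite.exists_notMem_finset J
  refine ⟨Function.update z j (v j + 1), ?_, ?_⟩
  · intro i hi
    exact Function.update_of_ne (by rintro rfl; exact hj hi) _ _
  · intro hmem
    rw [Set.mem_singleton_iff] at hmem
    have : Function.update z j (v j + 1) j = v j := by rw [hmem]
    rw [Function.update_self] at this
    omega

lemma meagre_preimage_homeo (h : ZN ≃ₜ ZN) {M : Set ZN} (hM : IsMeagre M) :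
    IsMeagre (h ⁻¹' M) := by
  rw [isMeagre_iff_countable_union_isNowhereDense] at hM ⊢
  obtain ⟨S, hnwd, hcnt, hsub⟩ := hM
  refine ⟨(fun s => h ⁻¹' s) '' S, ?_, hcnt.image _, ?_⟩
  · rintro t ⟨s, hs, rfl⟩
    show interior (closure (h ⁻¹' s)) = ∅
    rw [← h.preimage_closure, ← h.preimage_interior, hnwd s hs, Set.preimage_empty]
  · intro z hz
    obtain ⟨s, hsS, hzs⟩ := hsub hz
    exact ⟨h ⁻¹' s, Set.mem_image_of_mem _ hsS, hzs⟩

/-- The reflection `z ↦ v - z` as a homeomorphism of `ZN`. -/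
def subHomeo (v : ZN) : ZN ≃ₜ ZN where
  toFun z := v - z
  invFun z := v - z
  left_inv z := by funext i; simp
  right_inv z := by funext i; simp
  continuous_toFun := by
    refine continuous_pi fun i => ?_
    have : (fun z : ZN => (v - z) i) = fun z : ZN => v i - z i := by
      funext z; simp
    rw [this]
    exact continuous_const.sub (continuous_apply i)
  continuous_invFun := by
    refine continuous_pi fun i => ?_
    have : (fun z : ZN => (v - z) i) = fun z : ZN => v i - z i := by
      funext z; simp
    rw [this]
    exact continuous_const.sub (continuous_apply i)

lemma meagre_preimage_sub (v : ZN) {M : Set ZN} (hM : IsMeagre M) :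
    IsMeagre {z : ZN | v - z ∈ M} :=
  meagre_preimage_homeo (subHomeo v) hM

end Stmt9Aux
open Stmt9Aux in
theorem stmt9 (hcc : covMZ = cofMZ) (hreg : covMZ.IsRegular)
    (X : Set ZN) (hX : IsLuzinZ covMZ X) :
    ∃ Y : Set ZN, IsLuzinZ covMZ Y ∧ ¬ Menger (↥X × ↥Y) := by
  classical
  have hℵ : ℵ₀ ≤ covMZ := hreg.aleph0_le
  -- a cofinal family of meagre sets of cardinality covMZ
  have hmem : cofMZ ∈ {c | ∃ 𝓜 : Set (Set ZN), (∀ M ∈ 𝓜, IsMeagre M) ∧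
      (∀ M : Set ZN, IsMeagre M → ∃ N ∈ 𝓜, M ⊆ N) ∧ #(↥𝓜) = c} := by
    apply csInf_mem
    exact ⟨#(↥{M : Set ZN | IsMeagre M}), {M | IsMeagre M}, fun M hM => hM,
      fun M hM => ⟨M, hM, subset_rfl⟩, rfl⟩
  obtain ⟨𝓕, h𝓕meag, h𝓕cof, h𝓕card⟩ := hmem
  have hTcard : #(covMZ.ord.ToType) = covMZ := by
    rw [Cardinal.mk_toType, Cardinal.card_ord]
  obtain ⟨eqv⟩ : Nonempty (covMZ.ord.ToType ≃ ↥𝓕) := by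
    rw [← Cardinal.eq, hTcard, h𝓕card, hcc]
  set Mfam : covMZ.ord.ToType → Set ZN := fun β => (eqv β : Set ZN) with hMfam
  have hMfam_meagre : ∀ β, IsMeagre (Mfam β) := fun β => h𝓕meag _ (eqv β).2
  have hMfam_cof : ∀ M : Set ZN, IsMeagre M → ∃ β : covMZ.ord.ToType, M ⊆ Mfam β := by
    intro M hM
    obtain ⟨N, hN𝓕, hMN⟩ := h𝓕cof M hM
    refine ⟨eqv.symm ⟨N, hN𝓕⟩, ?_⟩
    have heq : Mfam (eqv.symm ⟨N, hN𝓕⟩) = N := by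
      simp only [hMfam, Equiv.apply_symm_apply]
    rw [heq]
    exact hMN
  -- cardinalities of initial segments
  have hIio_lt : ∀ α : covMZ.ord.ToType, #(↥(Set.Iio α)) < covMZ := by
    intro α
    haveI : IsWellOrder covMZ.ord.ToType (· < ·) := isWellOrder_lt
    have h1 : #(↥(Set.Iio α)) =
        ((Ordinal.typein (α := covMZ.ord.ToType) (· < ·)) α).card := by
      change _ = #{ y // y < α }
      rfl
    rw [h1]
    exact Cardinal.lt_ord.mp (Ordinal.typein_lt_self α)
  have hIic_lt : ∀ α : covMZ.ord.ToType, #(↥(Set.Iic α)) < covMZ := by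
    intro α
    have h1 : Set.Iic α = insert α (Set.Iio α) := Set.Iio_insert.symm
    rw [h1]
    refine lt_of_le_of_lt (Cardinal.mk_insert_le) ?_
    exact Cardinal.add_lt_of_lt hℵ (hIio_lt α) (lt_of_lt_of_le Cardinal.one_lt_aleph0 hℵ)
  -- decompositions and the dominating functions
  choose Fse hFse using fun β : covMZ.ord.ToType => meagre_decomp (hMfam_meagre β)
  choose d hdkey using fun β : covMZ.ord.ToType =>
    key_lemma (Fse β) (hFse β).1 (hFse β).2.1 (hFse β).2.2.1
  have domlemma : ∀ g : ℕ → ℕ, Monotone g → ∃ β : covMZ.ord.ToType, {n | d β n < g n}.Finite := by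
    intro g hg
    by_contra hcon
    push_neg at hcon
    obtain ⟨β, hQβ⟩ := hMfam_cof _ (bounded_meagre g)
    obtain ⟨x, hx1, hx2⟩ := hdkey β g hg (hcon β)
    exact hx2 ((hFse β).2.2.2 (hQβ hx1))
  -- an everywhere-dominating family indexed by covMZ.ord.ToType
  obtain ⟨ψ⟩ : Nonempty (covMZ.ord.ToType ≃ covMZ.ord.ToType × ℕ) := by
    rw [← Cardinal.eq, Cardinal.mk_prod, Cardinal.lift_id, Cardinal.lift_id, Cardinal.mk_nat,
      hTcard, Cardinal.mul_eq_left hℵ hℵ Cardinal.aleph0_ne_zero]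
  set D : covMZ.ord.ToType → ℕ → ℕ := fun α n => max (d (ψ α).1 n) (ψ α).2 with hD
  have hDdom : ∀ h : ℕ → ℕ, ∃ α : covMZ.ord.ToType, ∀ n, h n < D α n := by
    intro h
    have hgm : Monotone (fun n => (Finset.range (n + 1)).sup h + 1) := by
      intro a b hab
      have := Finset.sup_mono (f := h) (Finset.range_subset_range.mpr (by omega : a + 1 ≤ b + 1))
      beta_reduce
      omega
    set g : ℕ → ℕ := fun n => (Finset.range (n + 1)).sup h + 1 with hgdef
    have hgh : ∀ n, h n < g n := by
      intro n
      have := Finset.le_sup (f := h) (Finset.mem_range.mpr (by omega : n < n + 1))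
      simp only [hgdef]
      omega
    obtain ⟨β, hfin⟩ := domlemma g hgm
    obtain ⟨N, hN⟩ := hfin.bddAbove
    refine ⟨ψ.symm (β, g N), ?_⟩
    intro n
    have hψ : ψ (ψ.symm (β, g N)) = (β, g N) := ψ.apply_symm_apply _
    have hDval : D (ψ.symm (β, g N)) n = max (d β n) (g N) := by
      rw [hD]
      simp only [hψ]
    rw [hDval]
    rcases le_total n N with hn | hn
    · exact lt_of_lt_of_le (hgh n) (le_trans (hgm hn) (le_max_right _ _))
    · by_cases hd2 : d β n < g n
      · have hnN : n ≤ N := hN hd2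
        exact lt_of_lt_of_le (hgh n) (le_trans (hgm hnN) ((hgm (le_refl N)).trans (le_max_right _ _)))
      · have h2 : g n ≤ d β n := not_lt.mp hd2
        exact lt_of_lt_of_le (hgh n) (h2.trans (le_max_left _ _))
  set Ev : covMZ.ord.ToType → ZN := fun α => fun n => ((D α n : ℤ)) with hEv
  -- choose the points
  have hchoose : ∀ α : covMZ.ord.ToType, ∃ z, z ∈ X ∧ ∀ β ∈ Set.Iic α, Ev α - z ∉ Mfam β := by
    intro α
    have hBadcard : #(↥(⋃ β ∈ Set.Iic α, (X ∩ {z : ZN | Ev α - z ∈ Mfam β}))) < covMZ := by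
      rw [Set.biUnion_eq_iUnion]
      refine lt_of_le_of_lt (Cardinal.mk_iUnion_le _) ?_
      refine Cardinal.mul_lt_of_lt hℵ (hIic_lt α) ?_
      refine Cardinal.iSup_lt_of_isRegular hreg (hIic_lt α) ?_
      intro β
      exact hX.2 _ (meagre_preimage_sub (Ev α) (hMfam_meagre β))
    have hne : (X \ ⋃ β ∈ Set.Iic α, (X ∩ {z : ZN | Ev α - z ∈ Mfam β})).Nonempty := by
      rw [Set.nonempty_iff_ne_empty]
      intro hempty
      rw [Set.diff_eq_empty] at hempty
      exact absurd (hX.1.trans (Cardinal.mk_le_mk_of_subset hempty))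
        (not_le.mpr hBadcard)
    obtain ⟨z, hzX, hzB⟩ := hne
    refine ⟨z, hzX, ?_⟩
    intro β hβ hmem
    exact hzB (Set.mem_biUnion hβ ⟨hzX, hmem⟩)
  choose x hxX hxavoid using hchoose
  set y : covMZ.ord.ToType → ZN := fun α => Ev α - x α with hy
  have hyM : ∀ (β α : covMZ.ord.ToType), y α ∈ Mfam β → α < β := by
    intro β α hmem
    by_contra hle
    push_neg at hle
    exact hxavoid α β hle hmem
  refine ⟨Set.range y, ⟨?_, ?_⟩, ?_⟩
  · -- covMZ ≤ #Y
    by_contra hlt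
    push_neg at hlt
    have hfib : ∀ v : ↥(Set.range y), ∃ β : covMZ.ord.ToType, ∀ α, y α = ↑v → α < β := by
      intro v
      obtain ⟨β, hβ⟩ := hMfam_cof {(v : ZN)} (singleton_meagre _)
      exact ⟨β, fun α hα => hyM β α (hβ (by rw [hα]; rfl))⟩
    choose fib hfibspec using hfib
    have h1 : (Set.univ : Set covMZ.ord.ToType) ⊆ ⋃ v : ↥(Set.range y), Set.Iio (fib v) := by
      intro α _
      exact Set.mem_iUnion.2 ⟨⟨y α, α, rfl⟩, hfibspec _ α rfl⟩
    have h2 : covMZ ≤ #(↥(⋃ v : ↥(Set.range y), Set.Iio (fib v))) := by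
      have h2' := Cardinal.mk_le_mk_of_subset h1
      rw [Cardinal.mk_univ, hTcard] at h2'
      exact h2'
    have h3 : #(↥(⋃ v : ↥(Set.range y), Set.Iio (fib v))) < covMZ :=
      lt_of_le_of_lt (Cardinal.mk_iUnion_le _)
        (Cardinal.mul_lt_of_lt hℵ hlt
          (Cardinal.iSup_lt_of_isRegular hreg hlt fun v => hIio_lt _))
    exact absurd h2 (not_le.mpr h3)
  · -- intersections with meagre sets are small
    intro M hMme
    obtain ⟨β, hMβ⟩ := hMfam_cof M hMme
    have hsub3 : Set.range y ∩ M ⊆ y '' (Set.Iio β) := by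
      rintro v ⟨⟨α, rfl⟩, hvM⟩
      exact ⟨α, hyM β α (hMβ hvM), rfl⟩
    exact lt_of_le_of_lt
      ((Cardinal.mk_le_mk_of_subset hsub3).trans (Cardinal.mk_image_le)) (hIio_lt β)
  · -- not Menger
    intro hMenger
    set Usets : ℕ → ℕ → Set (↥X × ↥(Set.range y)) := fun n m =>
      {p | ((p.1 : ZN) n).natAbs < m ∧ ((p.2 : ZN) n).natAbs < m} with hUsets
    have hcov : ∀ n, IsOpenCover (Set.range (Usets n)) := by
      intro n
      constructor
      · rintro U ⟨m, rfl⟩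
        have heq : Usets n m = (fun p : ↥X × ↥(Set.range y) => (((p.1 : ZN) n), ((p.2 : ZN) n)))
            ⁻¹' {q : ℤ × ℤ | q.1.natAbs < m ∧ q.2.natAbs < m} := rfl
        rw [heq]
        refine Continuous.isOpen_preimage ?_ _ (isOpen_discrete _)
        exact Continuous.prodMk
          ((continuous_apply n).comp (continuous_subtype_val.comp continuous_fst))
          ((continuous_apply n).comp (continuous_subtype_val.comp continuous_snd))
      · rw [Set.eq_univ_iff_forall]
        intro p
        refine Set.mem_sUnion.2 ⟨Usets n (max ((p.1 : ZN) n).natAbs ((p.2 : ZN) n).natAbs + 1),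
          Set.mem_range_self _, ?_, ?_⟩
        · omega
        · omega
    obtain ⟨Fsel, hFprop, hFcover⟩ := hMenger (fun n => Set.range (Usets n)) hcov
    set mfun : ℕ → Set (↥X × ↥(Set.range y)) → ℕ := fun n U =>
      if h : ∃ m, U = Usets n m then h.choose else 0 with hmfun
    have hmfun_spec : ∀ n U, U ∈ Fsel n → U = Usets n (mfun n U) := by
      intro n U hU
      obtain ⟨m, hm⟩ := (hFprop n).2 hU
      have hex : ∃ m, U = Usets n m := ⟨m, hm.symm⟩
      rw [hmfun]
      simp only [dif_pos hex]
      exact hex.choose_spec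
    set g0 : ℕ → ℕ := fun n => ((hFprop n).1).toFinset.sup (mfun n) with hg0
    obtain ⟨α, hα⟩ := hDdom (fun n => 2 * g0 n)
    set p : ↥X × ↥(Set.range y) := (⟨x α, hxX α⟩, ⟨y α, α, rfl⟩) with hp
    have hpmem : p ∈ ⋃ n, ⋃₀ Fsel n := by rw [hFcover]; trivial
    obtain ⟨n, U, hUF, hpU⟩ : ∃ n, ∃ U ∈ Fsel n, p ∈ U := by
      rw [Set.mem_iUnion] at hpmem
      obtain ⟨n, hn⟩ := hpmem
      obtain ⟨U, hU, hpU⟩ := Set.mem_sUnion.mp hn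
      exact ⟨n, U, hU, hpU⟩
    have hUval := hmfun_spec n U hUF
    rw [hUval] at hpU
    obtain ⟨hpx, hpy⟩ := hpU
    have hmle : mfun n U ≤ g0 n := Finset.le_sup (((hFprop n).1).mem_toFinset.mpr hUF)
    have hsum : Ev α n = x α n + y α n := by
      rw [hy]
      simp
    have hnatabs : (Ev α n).natAbs = D α n := by
      rw [hEv]
      exact Int.natAbs_natCast _
    have hbound : (Ev α n).natAbs ≤ ((x α n).natAbs + (y α n).natAbs) := by
      rw [hsum]
      exact Int.natAbs_add_le _ _
    have hDα := hα n
    simp only [hp] at hpx hpy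
    omega
end
end

section
/- For every meager set M ⊆ 𝒫(ℕ) there exist a set a ∈ [ℕ]^∞ and a function f ∈ [ℕ]^∞ such that M is contained in the meager set {x ∈ 𝒫(ℕ) : x ∩ [f(n), f(n+1)) ≠ a ∩ [f(n), f(n+1)) for all but finitely many n}. -/
open Set Filter Cardinal

noncomputable section

section Aux

open Set

/-- Cylinder neighborhoods form a basis in Cantor space. -/
private lemma cyl_basis {V : Set CS} (hV : IsOpen V) {y : CS} (hy : y ∈ V) :
    ∃ N : ℕ, ∀ x : CS, (∀ j < N, x j = y j) → x ∈ V := by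
  classical
  obtain ⟨I, u, hIu, hsub⟩ := isOpen_pi_iff.1 hV y hy
  refine ⟨I.sup id + 1, fun x hx => hsub ?_⟩
  intro i hi
  have hi' : i ∈ I := hi
  rw [hx i (Nat.lt_succ_of_le (Finset.le_sup (f := id) hi'))]
  exact (hIu i hi').2

private lemma isOpen_agree (a : CS) (u v : ℕ) :
    IsOpen {x : CS | ∀ j, u ≤ j → j < v → x j = a j} := by
  have : {x : CS | ∀ j, u ≤ j → j < v → x j = a j}
      = ⋂ j ∈ Set.Ico u v, {x : CS | x j = a j} := by
    ext x
    simp only [Set.mem_setOf_eq, Set.mem_iInter, Set.mem_Ico, and_imp]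
  rw [this]
  refine (Set.finite_Ico u v).isOpen_biInter (fun j _ => ?_)
  have h : {x : CS | x j = a j} = (fun x : CS => x j) ⁻¹' {a j} := rfl
  rw [h]
  exact IsOpen.preimage (continuous_apply j) (isOpen_discrete _)

private lemma agree_iff (x a : CS) (u v : ℕ) :
    supp x ∩ Set.Ico u v = supp a ∩ Set.Ico u v ↔ ∀ j, u ≤ j → j < v → x j = a j := by
  constructor
  · intro h j h1 h2
    have := Set.ext_iff.1 h j
    simp only [Set.mem_inter_iff, Set.mem_Ico, supp, Set.mem_setOf_eq, h1, h2,
      and_true, true_and] at this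
    cases hxj : x j <;> cases haj : a j <;> simp_all
  · intro h
    ext j
    by_cases hj : u ≤ j ∧ j < v
    · simp [supp, Set.mem_Ico, hj.1, hj.2, h j hj.1 hj.2]
    · simp only [Set.mem_inter_iff, Set.mem_Ico, supp, Set.mem_setOf_eq]
      tauto

private lemma extend_avoid {F : Set CS} (hF : IsClosed F) (hint : interior F = ∅)
    (c : CS) (p : ℕ) :
    ∃ p', p ≤ p' ∧ ∃ c' : CS, (∀ j < p, c' j = c j) ∧
      ∀ x : CS, (∀ j < p', x j = c' j) → x ∉ F := by
  have hU : IsOpen {x : CS | ∀ j < p, x j = c j} := by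
    have := isOpen_agree c 0 p
    simpa using this
  have hcU : c ∈ {x : CS | ∀ j < p, x j = c j} := fun j _ => rfl
  have : ∃ y ∈ {x : CS | ∀ j < p, x j = c j}, y ∉ F := by
    by_contra hcon
    push_neg at hcon
    have : {x : CS | ∀ j < p, x j = c j} ⊆ interior F :=
      interior_maximal hcon hU
    rw [hint] at this
    exact this hcU
  obtain ⟨y, hyU, hyF⟩ := this
  obtain ⟨N, hN⟩ := cyl_basis (hF.isOpen_compl) (show y ∈ Fᶜ from hyF)
  refine ⟨max p N, le_max_left _ _, y, fun j hj => hyU j hj, fun x hx => ?_⟩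
  exact hN x (fun j hj => hx j (lt_of_lt_of_le hj (le_max_right _ _)))

private lemma key_avoid {F : Set CS} (hF : IsClosed F) (hint : interior F = ∅) (m : ℕ) :
    ∃ m', m < m' ∧ ∃ b : CS,
      (∀ x : CS, (∀ j, m ≤ j → j < m' → x j = b j) → x ∉ F) ∧
      ∃ j, m ≤ j ∧ j < m' ∧ b j = true := by
  classical
  have claim : ∀ S : Finset (Fin m → Bool), ∃ p, m ≤ p ∧ ∃ b : CS,
      ∀ s ∈ S, ∀ x : CS, (∀ j : Fin m, x (j : ℕ) = s j) →
        (∀ j, m ≤ j → j < p → x j = b j) → x ∉ F := by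
    intro S
    induction S using Finset.induction_on with
    | empty => exact ⟨m, le_rfl, fun _ => false, by simp⟩
    | @insert s S hs ih =>
        obtain ⟨p, hmp, b, hb⟩ := ih
        obtain ⟨p', hpp', c', hc'c, hc'⟩ :=
          extend_avoid hF hint (fun j => if h : j < m then s ⟨j, h⟩ else b j) p
        refine ⟨p', le_trans hmp hpp', fun j => if j < p then b j else c' j, ?_⟩
        intro t ht x hxs hxb
        beta_reduce at hxb
        rcases Finset.mem_insert.1 ht with rfl | htS
        · apply hc' x
          intro j hj
          by_cases hjm : j < m
          · have h2 := hc'c j (lt_of_lt_of_le hjm hmp)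
            rw [dif_pos hjm] at h2
            rw [hxs ⟨j, hjm⟩, h2]
          · push_neg at hjm
            by_cases hjp : j < p
            · have h2 := hc'c j hjp
              rw [dif_neg (not_lt.2 hjm)] at h2
              rw [hxb j hjm (lt_of_lt_of_le hjp hpp'), if_pos hjp, h2]
            · rw [hxb j hjm hj, if_neg hjp]
        · apply hb t htS x hxs
          intro j h1 h2
          rw [hxb j h1 (lt_of_lt_of_le h2 hpp')]
          exact if_pos h2
  obtain ⟨p, hmp, b, hb⟩ := claim Finset.univ
  refine ⟨p + 1, Nat.lt_succ_of_le hmp, Function.update b p true, ?_, ?_⟩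
  · intro x hx
    refine hb (fun j => x (j : ℕ)) (Finset.mem_univ _) x (fun _ => rfl) ?_
    intro j h1 h2
    rw [hx j h1 (Nat.lt_succ_of_lt h2), Function.update_of_ne (Nat.ne_of_lt h2)]
  · exact ⟨p, hmp, Nat.lt_succ_self p, Function.update_self p true b⟩

private lemma interior_union_empty {A B : Set CS} (hA : IsClosed A)
    (hiA : interior A = ∅) (hiB : interior B = ∅) : interior (A ∪ B) = ∅ := by
  have h1 : interior (A ∪ B) ∩ Aᶜ ⊆ interior B := by
    apply interior_maximal
    · intro x ⟨hx1, hx2⟩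
      rcases interior_subset hx1 with h | h
      · exact absurd h hx2
      · exact h
    · exact isOpen_interior.inter hA.isOpen_compl
  rw [hiB, Set.subset_empty_iff, ← Set.disjoint_iff_inter_eq_empty,
    Set.disjoint_compl_right_iff_subset] at h1
  have h2 : interior (A ∪ B) ⊆ interior A := interior_maximal h1 isOpen_interior
  rw [hiA, Set.subset_empty_iff] at h2
  exact h2

private lemma main_construction (G : ℕ → Set CS)
    (hGc : ∀ n, IsClosed (G n)) (hGi : ∀ n, interior (G n) = ∅) :
    ∃ (f : ℕ → ℕ) (a : CS), f 0 = 0 ∧ StrictMono f ∧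
      (∀ n, ∃ j, f n ≤ j ∧ j < f (n + 1) ∧ a j = true) ∧
      (∀ n, ∀ x : CS, (∀ j, f n ≤ j → j < f (n + 1) → x j = a j) → x ∉ G n) := by
  classical
  have step : ∀ n m, ∃ m', m < m' ∧ ∃ b : CS,
      (∀ x : CS, (∀ j, m ≤ j → j < m' → x j = b j) → x ∉ G n) ∧
      ∃ j, m ≤ j ∧ j < m' ∧ b j = true := fun n m => key_avoid (hGc n) (hGi n) m
  choose m' hlt b hb htrue using step
  let f : ℕ → ℕ := fun n => Nat.rec (motive := fun _ => ℕ) 0 (fun k ih => m' k ih) n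
  have hf0 : f 0 = 0 := rfl
  have hfs : ∀ n, f (n + 1) = m' n (f n) := fun n => rfl
  have hmono : StrictMono f := strictMono_nat_of_lt_succ (fun n => by
    rw [hfs]; exact hlt n (f n))
  have hex : ∀ j : ℕ, ∃ n, j < f (n + 1) := fun j =>
    ⟨j, lt_of_lt_of_le (Nat.lt_succ_self j) hmono.le_apply⟩
  let idx : ℕ → ℕ := fun j => Nat.find (hex j)
  have hidx : ∀ n j, f n ≤ j → j < f (n + 1) → idx j = n := by
    intro n j h1 h2
    have hle : idx j ≤ n := Nat.find_le h2
    rcases lt_or_eq_of_le hle with h | h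
    · exfalso
      exact absurd (lt_of_lt_of_le (Nat.find_spec (hex j))
        (hmono.monotone (Nat.succ_le_of_lt h))) (not_lt.2 h1)
    · exact h
  refine ⟨f, fun j => b (idx j) (f (idx j)) j, hf0, hmono, ?_, ?_⟩
  · intro n
    obtain ⟨j, h1, h2, h3⟩ := htrue n (f n)
    have h2' : j < f (n + 1) := by rw [hfs]; exact h2
    refine ⟨j, h1, h2', ?_⟩
    show b (idx j) (f (idx j)) j = true
    rw [hidx n j h1 h2']
    exact h3
  · intro n x hx
    have : ∀ j, f n ≤ j → j < m' n (f n) → x j = b n (f n) j := by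
      intro j h1 h2
      have h2' : j < f (n + 1) := by rw [hfs]; exact h2
      have h4 : x j = b (idx j) (f (idx j)) j := hx j h1 h2'
      rwa [hidx n j h1 h2'] at h4
    exact hb n (f n) x this

private lemma enum_range {f : ℕ → ℕ} (hf : StrictMono f) : enum (Set.range f) = f := by
  have hinf : (setOf (· ∈ Set.range f)).Infinite := by
    exact Set.infinite_range_of_injective hf.injective
  have h1 : StrictMono (Nat.nth (· ∈ Set.range f)) := Nat.nth_strictMono hinf
  have h2 : Set.range (Nat.nth (· ∈ Set.range f)) = Set.range f := by
    exact Nat.range_nth_of_infinite hinf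
  exact (StrictMono.range_inj h1 hf).1 h2

end Aux

theorem stmt15 (M : Set CS) (hM : IsMeagre M) :
    ∃ a f : Set ℕ, a.Infinite ∧ f.Infinite ∧
      IsMeagre {x : CS | ∀ᶠ n in Filter.atTop,
        supp x ∩ Set.Ico (enum f n) (enum f (n + 1)) ≠
          a ∩ Set.Ico (enum f n) (enum f (n + 1))} ∧
      M ⊆ {x : CS | ∀ᶠ n in Filter.atTop,
        supp x ∩ Set.Ico (enum f n) (enum f (n + 1)) ≠
          a ∩ Set.Ico (enum f n) (enum f (n + 1))} := by
  classical
  obtain ⟨S, hSnwd, hScount, hMsub⟩ := isMeagre_iff_countable_union_isNowhereDense.1 hM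
  obtain ⟨T, hTnwd, hMT⟩ : ∃ T : ℕ → Set CS, (∀ n, IsNowhereDense (T n)) ∧ M ⊆ ⋃ n, T n := by
    rcases Set.eq_empty_or_nonempty S with rfl | hS
    · exact ⟨fun _ => ∅, fun _ => isNowhereDense_empty, by simpa using hMsub⟩
    · obtain ⟨g, hg⟩ := hScount.exists_eq_range hS
      refine ⟨g, fun n => hSnwd _ (by rw [hg]; exact Set.mem_range_self n), ?_⟩
      intro x hx
      obtain ⟨t, htS, hxt⟩ := hMsub hx
      rw [hg] at htS
      obtain ⟨n, rfl⟩ := htS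
      exact Set.mem_iUnion.2 ⟨n, hxt⟩
  let G : ℕ → Set CS := fun n => Nat.rec (motive := fun _ => Set CS) (closure (T 0))
    (fun k ih => ih ∪ closure (T (k + 1))) n
  have hGs : ∀ n, G (n + 1) = G n ∪ closure (T (n + 1)) := fun _ => rfl
  have hGc : ∀ n, IsClosed (G n) := by
    intro n; induction n with
    | zero => exact isClosed_closure
    | succ k ih => rw [hGs]; exact ih.union isClosed_closure
  have hGi : ∀ n, interior (G n) = ∅ := by
    intro n; induction n with
    | zero => exact hTnwd 0
    | succ k ih => rw [hGs]; exact interior_union_empty (hGc k) ih (hTnwd (k + 1))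
  have hGmono : Monotone G := monotone_nat_of_le_succ (fun n => by
    rw [hGs]; exact Set.subset_union_left)
  have hTG : ∀ n, T n ⊆ G n := by
    intro n; cases n with
    | zero => exact subset_closure
    | succ k => rw [hGs]; exact subset_closure.trans Set.subset_union_right
  obtain ⟨f, a, hf0, hmono, hta, havoid⟩ := main_construction G hGc hGi
  refine ⟨supp a, Set.range f, ?_,
    Set.infinite_range_of_injective hmono.injective, ?_, ?_⟩
  · apply Set.infinite_of_not_bddAbove
    rintro ⟨c, hc⟩
    obtain ⟨j, h1, h2, h3⟩ := hta (c + 1)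
    have hjc : j ≤ c := hc h3
    have : c + 1 ≤ j := le_trans hmono.le_apply h1
    omega
  · rw [enum_range hmono]
    have hDsub : {x : CS | ∀ᶠ n in Filter.atTop,
          supp x ∩ Set.Ico (f n) (f (n + 1)) ≠ supp a ∩ Set.Ico (f n) (f (n + 1))}
        = ⋃ m, {x : CS | ∀ n, m ≤ n →
          supp x ∩ Set.Ico (f n) (f (n + 1)) ≠ supp a ∩ Set.Ico (f n) (f (n + 1))} := by
      ext x
      simp only [Set.mem_setOf_eq, Filter.eventually_atTop, Set.mem_iUnion]
    rw [hDsub]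
    apply isMeagre_iUnion
    intro m
    set Dm : Set CS := {x : CS | ∀ n, m ≤ n →
      supp x ∩ Set.Ico (f n) (f (n + 1)) ≠ supp a ∩ Set.Ico (f n) (f (n + 1))} with hDm
    have hclosed : IsClosed Dm := by
      have h1 : Dm = ⋂ n, {x : CS | m ≤ n →
          supp x ∩ Set.Ico (f n) (f (n + 1)) ≠ supp a ∩ Set.Ico (f n) (f (n + 1))} := by
        ext x; simp [hDm]
      rw [h1]
      apply isClosed_iInter
      intro n
      by_cases hmn : m ≤ n
      · have h2 : {x : CS | m ≤ n →
            supp x ∩ Set.Ico (f n) (f (n + 1)) ≠ supp a ∩ Set.Ico (f n) (f (n + 1))}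
            = {x : CS | ∀ j, f n ≤ j → j < f (n + 1) → x j = a j}ᶜ := by
          ext x
          simp only [Set.mem_setOf_eq, Set.mem_compl_iff, hmn, true_implies]
          exact not_congr (agree_iff x a _ _)
        rw [h2]
        exact (isOpen_agree a _ _).isClosed_compl
      · have h2 : {x : CS | m ≤ n →
            supp x ∩ Set.Ico (f n) (f (n + 1)) ≠ supp a ∩ Set.Ico (f n) (f (n + 1))}
            = Set.univ := by
          ext x; simp [hmn]
        rw [h2]
        exact isClosed_univ
    have hint : interior Dm = ∅ := by
      rw [Set.eq_empty_iff_forall_notMem]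
      intro y hy
      obtain ⟨N, hN⟩ := cyl_basis isOpen_interior hy
      have hx : (fun j => if j < f (max m N) then y j else a j) ∈ Dm :=
        interior_subset (hN _ (fun j hj => if_pos (lt_of_lt_of_le hj
          (le_trans (le_max_right m N) hmono.le_apply))))
      have heq : supp (fun j => if j < f (max m N) then y j else a j) ∩
            Set.Ico (f (max m N)) (f (max m N + 1))
          = supp a ∩ Set.Ico (f (max m N)) (f (max m N + 1)) :=
        (agree_iff _ a _ _).2 (fun j h1 _ => if_neg (not_lt.2 h1))
      exact hx (max m N) (le_max_left m N) heq
    exact isMeagre_iff_countable_union_isNowhereDense.mpr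
      ⟨{Dm}, by simpa using hclosed.isNowhereDense_iff.2 hint,
        Set.countable_singleton _, by simp⟩
  · rw [enum_range hmono]
    intro x hx
    obtain ⟨k, hk⟩ := Set.mem_iUnion.1 (hMT hx)
    simp only [Set.mem_setOf_eq, Filter.eventually_atTop]
    refine ⟨k, fun n hn hcon => ?_⟩
    exact havoid n x ((agree_iff x a _ _).1 hcon) (hGmono hn (hTG k hk))
end
end
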